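/- arXiv:math/9706214 — 5 statements merged into one kernel-verified Lean document; each statement's English description precedes it below -/
import Mathlib

section
/- Let X be a real Banach space whose norm is locally uniformly convex and uniformly smooth, let p > 1, and let f : X → ℝ ∪ {+∞} be proper, lower semicontinuous and bounded below. Then for every n ∈ ℕ one has inf_X f ≤ Δ_n^p f(x) ≤ f(x) for all x ∈ X, and the set of minimizers of Δ_n^p f equals the set of minimizers of f, i.e. {x ∈ X : Δ_n^p f(x) = inf_X Δ_n^p f} = {x ∈ X : f(x) = inf_X f}. -/
open scoped BigOperators

/-- The convex envelope of a function `h : X → ℝ`, given by the infimum over all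
finite convex combinations. -/
noncomputable def convEnv {X : Type*} [NormedAddCommGroup X] [NormedSpace ℝ X]
    (h : X → ℝ) (x : X) : ℝ :=
  sInf { r : ℝ | ∃ (m : ℕ) (l : Fin m → ℝ) (z : Fin m → X),
    (∀ i, 0 < l i) ∧ ∑ i, l i = 1 ∧ ∑ i, l i • z i = x ∧ ∑ i, l i * h (z i) = r }

/-- The kernel `K_p(x,y) = 2^(p-1)‖x‖^p + 2^(p-1)‖y‖^p - ‖x+y‖^p`. -/
noncomputable def Kp {X : Type*} [NormedAddCommGroup X] (p : ℝ) (x y : X) : ℝ :=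
  2 ^ (p - 1) * ‖x‖ ^ p + 2 ^ (p - 1) * ‖y‖ ^ p - ‖x + y‖ ^ p

/-- `g_n^p(x) = inf_y (f(y) + n K_p(x,y)) + 2^(p-1) n ‖x‖^p`. -/
noncomputable def gnp {X : Type*} [NormedAddCommGroup X] (p : ℝ) (f : X → EReal)
    (n : ℕ) (x : X) : ℝ :=
  (⨅ y, f y + (((n : ℝ) * Kp p x y : ℝ) : EReal)).toReal + 2 ^ (p - 1) * (n : ℝ) * ‖x‖ ^ p

/-- `Δ_n^p f = co(g_n^p) - 2^(p-1) n ‖·‖^p`. -/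
noncomputable def Delta {X : Type*} [NormedAddCommGroup X] [NormedSpace ℝ X]
    (p : ℝ) (f : X → EReal) (n : ℕ) (x : X) : ℝ :=
  convEnv (gnp p f n) x - 2 ^ (p - 1) * (n : ℝ) * ‖x‖ ^ p

/-!
Write `C = 2^(p-1) n` and `μ = inf f`. Since `K_p ≥ 0` and `K_p(x, x) = 0`, the convex function
`μ + C‖·‖^p` lies below `g_n^p`, which lies below `f + C‖·‖^p`; hence `μ ≤ Δ_n^p f ≤ f`,
`inf Δ_n^p f = μ`, and every minimizer of `f` minimizes `Δ_n^p f`.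

Conversely, let `Δ_n^p f(x) = μ` and let `j` be a norming functional of `x`. The tangent of
`μ + C‖·‖^p` at `x` is an affine minorant of `g_n^p` touching its convex envelope at `x`, so
there are points `z_k` at which both `g_n^p(z_k) - μ - C‖z_k‖^p` and the Bregman distance of
`‖·‖^p` from `x` to `z_k` tend to `0`, and then points `y_k` with `f(y_k) → μ` and
`K_p(z_k, y_k) → 0`. Local uniform convexity turns both smallness statements into `z_k → x` and
`y_k → x` (the one-variable profiles `t ↦ t^p - p s^(p-1) t` and
`t ↦ 2^(p-1)(s^p + t^p) - (s + t)^p` have a strict minimum at `s = ‖x‖`), and lower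
semicontinuity gives `f(x) ≤ μ`.
-/
open Set Filter Topology

structure IsStrictValley (φ : ℝ → ℝ) (s : ℝ) : Prop where
  strictAntiOn : StrictAntiOn φ (Icc 0 s)
  strictMonoOn : StrictMonoOn φ (Ici s)

namespace IsStrictValley

variable {φ : ℝ → ℝ} {s : ℝ}

theorem of_hasDerivAt {φ' : ℝ → ℝ} (hs : 0 ≤ s) (hφ : ContinuousOn φ (Ici 0))
    (hφ' : ∀ t, 0 < t → HasDerivAt φ (φ' t) t) (hneg : ∀ t, 0 < t → t < s → φ' t < 0)
    (hpos : ∀ t, s < t → 0 < φ' t) : IsStrictValley φ s where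
  strictAntiOn := strictAntiOn_of_deriv_neg (convex_Icc 0 s) (hφ.mono Icc_subset_Ici_self)
    fun t ht => by
      rw [interior_Icc] at ht
      rw [(hφ' t ht.1).deriv]
      exact hneg t ht.1 ht.2
  strictMonoOn := strictMonoOn_of_deriv_pos (convex_Ici s) (hφ.mono (Ici_subset_Ici.2 hs))
    fun t ht => by
      rw [interior_Ici] at ht
      rw [(hφ' t (hs.trans_lt ht)).deriv]
      exact hpos t ht

theorem le_apply (hφ : IsStrictValley φ s) {t : ℝ} (ht : 0 ≤ t) : φ s ≤ φ t := by
  rcases le_total t s with hts | hst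
  · exact hφ.strictAntiOn.antitoneOn ⟨ht, hts⟩ ⟨ht.trans hts, le_rfl⟩ hts
  · exact hφ.strictMonoOn.monotoneOn self_mem_Ici hst hst

theorem tendsto_of_tendsto_apply (hφ : IsStrictValley φ s) {α : Type*} {l : Filter α}
    {t : α → ℝ} (ht : ∀ a, 0 ≤ t a) (h : Tendsto (fun a => φ (t a)) l (𝓝 (φ s))) :
    Tendsto t l (𝓝 s) := by
  refine tendsto_order.2 ⟨fun b hb => ?_, fun b hb => ?_⟩
  · rcases lt_or_ge b 0 with hb0 | hb0
    · exact Eventually.of_forall fun a => hb0.trans_le (ht a)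
    have hφb : φ s < φ b := hφ.strictAntiOn ⟨hb0, hb.le⟩ ⟨hb0.trans hb.le, le_rfl⟩ hb
    filter_upwards [h.eventually (gt_mem_nhds hφb)] with a ha
    by_contra! hab
    exact ha.not_ge (hφ.strictAntiOn.antitoneOn ⟨ht a, hab.trans hb.le⟩ ⟨hb0, hb.le⟩ hab)
  · have hφb : φ s < φ b := hφ.strictMonoOn self_mem_Ici hb.le hb
    filter_upwards [h.eventually (gt_mem_nhds hφb)] with a ha
    by_contra! hab
    exact ha.not_ge (hφ.strictMonoOn.monotoneOn hb.le (hb.le.trans hab) hab)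

end IsStrictValley

section RpowProfiles

variable {p : ℝ}

theorem isStrictValley_rpow_sub_mul (hp : 1 < p) {s : ℝ} (hs : 0 ≤ s) :
    IsStrictValley (fun t => t ^ p - p * s ^ (p - 1) * t) s := by
  refine .of_hasDerivAt (φ' := fun t => p * t ^ (p - 1) - p * s ^ (p - 1)) hs
    (((Real.continuous_rpow_const (by linarith)).sub (continuous_const_mul _)).continuousOn)
    (fun t ht => by
      simpa using (Real.hasDerivAt_rpow_const (p := p) (Or.inl ht.ne')).fun_sub
        ((hasDerivAt_id t).const_mul (p * s ^ (p - 1))))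
    (fun t ht hts => ?_) (fun t hst => ?_)
  · have := Real.rpow_lt_rpow ht.le hts (by linarith : 0 < p - 1)
    nlinarith
  · have := Real.rpow_lt_rpow hs hst (by linarith : 0 < p - 1)
    nlinarith

theorem rpow_add_mul_sub_le_rpow (hp : 1 < p) {s t : ℝ} (hs : 0 ≤ s) (ht : 0 ≤ t) :
    s ^ p + p * s ^ (p - 1) * (t - s) ≤ t ^ p := by
  have := (isStrictValley_rpow_sub_mul hp hs).le_apply ht
  linarith

theorem isStrictValley_two_rpow_mul_add_sub (hp : 1 < p) {s : ℝ} (hs : 0 ≤ s) :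
    IsStrictValley (fun t => 2 ^ (p - 1) * (s ^ p + t ^ p) - (s + t) ^ p) s := by
  have hcont : Continuous fun t : ℝ => t ^ p := Real.continuous_rpow_const (by linarith)
  refine .of_hasDerivAt (φ' := fun t => 2 ^ (p - 1) * (p * t ^ (p - 1)) - p * (s + t) ^ (p - 1)) hs
    ((continuous_const.mul (continuous_const.add hcont)).sub
      (hcont.comp (continuous_const_add s))).continuousOn
    (fun t ht => by
      simpa using (((Real.hasDerivAt_rpow_const (p := p) (Or.inl ht.ne')).const_add
        (s ^ p)).const_mul ((2 : ℝ) ^ (p - 1))).fun_sub ((Real.hasDerivAt_rpow_const (p := p)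
          (Or.inl (by positivity : s + t ≠ 0))).comp t ((hasDerivAt_id t).const_add s)))
    (fun t ht hts => ?_) (fun t hst => ?_)
  · have : (2 * t) ^ (p - 1) < (s + t) ^ (p - 1) :=
      Real.rpow_lt_rpow (by positivity) (by linarith) (by linarith)
    rw [Real.mul_rpow (by norm_num) ht.le] at this
    nlinarith
  · have : (s + t) ^ (p - 1) < (2 * t) ^ (p - 1) :=
      Real.rpow_lt_rpow (by linarith) (by linarith) (by linarith)
    rw [Real.mul_rpow (by norm_num) (by linarith)] at this
    nlinarith

theorem two_rpow_mul_add_self_sub_eq_zero (p : ℝ) {s : ℝ} (hs : 0 ≤ s) :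
    2 ^ (p - 1) * (s ^ p + s ^ p) - (s + s) ^ p = 0 := by
  rw [← two_mul, ← two_mul, Real.mul_rpow (by norm_num) hs,
    Real.rpow_sub_one (by norm_num : (2 : ℝ) ≠ 0)]
  field_simp
  ring

end RpowProfiles

section Kernel

variable {X : Type*} [NormedAddCommGroup X] {p : ℝ}

theorem Kp_nonneg (hp : 1 < p) (x y : X) : 0 ≤ Kp p x y := by
  have hprofile :=
    (isStrictValley_two_rpow_mul_add_sub hp (norm_nonneg x)).le_apply (norm_nonneg y)
  have htri : ‖x + y‖ ^ p ≤ (‖x‖ + ‖y‖) ^ p :=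
    Real.rpow_le_rpow (norm_nonneg _) (norm_add_le x y) (by linarith)
  rw [two_rpow_mul_add_self_sub_eq_zero p (norm_nonneg x)] at hprofile
  unfold Kp
  linarith

theorem Kp_self [NormedSpace ℝ X] (p : ℝ) (x : X) : Kp p x x = 0 := by
  have hdouble : ‖x + x‖ = ‖x‖ + ‖x‖ := by
    rw [← two_smul ℝ x, norm_smul, Real.norm_two, two_mul]
  rw [Kp, hdouble, ← two_rpow_mul_add_self_sub_eq_zero p (norm_nonneg x)]
  ring

theorem exists_mul_rpow_le_Kp (hp : 1 < p) :
    ∃ c > 0, ∃ C, ∀ z y : X, c * ‖y‖ ^ p ≤ Kp p z y + C * ‖z‖ ^ p := by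
  have hp1 : 0 < p - 1 := by linarith
  refine ⟨2 ^ (p - 1) - (3 / 2) ^ (p - 1), sub_pos.2 (Real.rpow_lt_rpow (by norm_num)
    (by norm_num) hp1), 3 ^ (p - 1), fun z y => ?_⟩
  have hweighted : (‖z‖ + ‖y‖) ^ p ≤ 3 ^ (p - 1) * ‖z‖ ^ p + (3 / 2) ^ (p - 1) * ‖y‖ ^ p := by
    have := (convexOn_rpow hp.le).2 (mem_Ici.2 (by positivity : (0 : ℝ) ≤ 3 * ‖z‖))
      (mem_Ici.2 (by positivity : (0 : ℝ) ≤ 3 / 2 * ‖y‖)) (by norm_num : (0 : ℝ) ≤ 1 / 3)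
      (by norm_num : (0 : ℝ) ≤ 2 / 3) (by norm_num)
    simp only [smul_eq_mul] at this
    rw [Real.mul_rpow (by norm_num) (norm_nonneg _), Real.mul_rpow (by norm_num) (norm_nonneg _),
      show 1 / 3 * (3 * ‖z‖) + 2 / 3 * (3 / 2 * ‖y‖) = ‖z‖ + ‖y‖ by ring] at this
    rw [Real.rpow_sub_one (by norm_num), Real.rpow_sub_one (by norm_num)]
    linarith
  have htri : ‖z + y‖ ^ p ≤ (‖z‖ + ‖y‖) ^ p :=
    Real.rpow_le_rpow (norm_nonneg _) (norm_add_le z y) (by linarith)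
  have h2 : 0 ≤ 2 ^ (p - 1) * ‖z‖ ^ p := by positivity
  unfold Kp
  nlinarith

end Kernel

section Bregman

variable {X : Type*} [NormedAddCommGroup X] [NormedSpace ℝ X] {p : ℝ}

noncomputable def bregman (p : ℝ) (j : StrongDual ℝ X) (x z : X) : ℝ :=
  ‖z‖ ^ p - ‖x‖ ^ p - p * ‖x‖ ^ (p - 1) * (j z - ‖x‖)

theorem bregman_eq (p : ℝ) (j : StrongDual ℝ X) (x z : X) :
    bregman p j x z = (‖z‖ ^ p - p * ‖x‖ ^ (p - 1) * ‖z‖ - (‖x‖ ^ p - p * ‖x‖ ^ (p - 1) * ‖x‖))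
      + p * ‖x‖ ^ (p - 1) * (‖z‖ - j z) := by
  unfold bregman
  ring

theorem bregman_nonneg (hp : 1 < p) {j : StrongDual ℝ X} (hj : ∀ w, j w ≤ ‖w‖) (x z : X) :
    0 ≤ bregman p j x z := by
  rw [bregman_eq]
  exact add_nonneg (sub_nonneg.2 ((isStrictValley_rpow_sub_mul hp (norm_nonneg x)).le_apply
    (norm_nonneg z))) (mul_nonneg (by positivity) (sub_nonneg.2 (hj z)))

end Bregman

def LocallyUniformlyConvex (X : Type*) [NormedAddCommGroup X] : Prop :=
  ∀ x : X, ‖x‖ = 1 → ∀ ε : ℝ, 0 < ε → ∃ δ : ℝ, 0 < δ ∧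
    ∀ y : X, ‖y‖ = 1 → ε ≤ ‖x - y‖ → ‖x + y‖ / 2 ≤ 1 - δ

namespace LocallyUniformlyConvex

variable {X : Type*} [NormedAddCommGroup X] {α : Type*} {l : Filter α}

theorem tendsto_of_tendsto_norm_add_of_norm_eq_one (hX : LocallyUniformlyConvex X) {u : X}
    (hu : ‖u‖ = 1) {v : α → X} (hv : ∀ᶠ a in l, ‖v a‖ = 1)
    (h : Tendsto (fun a => ‖u + v a‖) l (𝓝 2)) : Tendsto v l (𝓝 u) := by
  refine Metric.tendsto_nhds.2 fun ε hε => ?_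
  obtain ⟨δ, hδ, hfar⟩ := hX u hu ε hε
  filter_upwards [hv, h.eventually (lt_mem_nhds (by linarith : 2 - 2 * δ < 2))]
    with a hva hclose
  rw [dist_eq_norm, norm_sub_rev]
  by_contra! hε'
  linarith [hfar (v a) hva hε']

variable [NormedSpace ℝ X]

theorem tendsto_of_tendsto_norm (hX : LocallyUniformlyConvex X) {x : X} {y : α → X}
    (hy : Tendsto (fun a => ‖y a‖) l (𝓝 ‖x‖))
    (hxy : Tendsto (fun a => ‖x + y a‖) l (𝓝 (2 * ‖x‖))) : Tendsto y l (𝓝 x) := by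
  rcases (norm_nonneg x).eq_or_lt with hx | hx
  · rw [eq_comm, norm_eq_zero] at hx
    subst hx
    exact tendsto_zero_iff_norm_tendsto_zero.2 (by simpa using hy)
  set s := ‖x‖
  set u := s⁻¹ • x
  set v := fun a => ‖y a‖⁻¹ • y a
  have hu : ‖u‖ = 1 := norm_smul_inv_norm (norm_pos_iff.1 hx)
  have hy0 : ∀ᶠ a in l, 0 < ‖y a‖ := hy.eventually (lt_mem_nhds hx)
  have hv : ∀ᶠ a in l, ‖v a‖ = 1 := hy0.mono fun a ha => norm_smul_inv_norm (norm_pos_iff.1 ha)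
  have hsplit : ∀ a, u + v a = s⁻¹ • (x + y a) + (‖y a‖⁻¹ - s⁻¹) • y a := fun a => by
    simp only [u, v, smul_add, sub_smul]
    abel
  have hmain : Tendsto (fun a => ‖s⁻¹ • (x + y a)‖) l (𝓝 2) := by
    simp only [norm_smul, norm_inv, Real.norm_of_nonneg hx.le]
    convert hxy.const_mul s⁻¹ using 2
    field_simp
  have herr : Tendsto (fun a => ‖(‖y a‖⁻¹ - s⁻¹) • y a‖) l (𝓝 0) := by
    simp only [norm_smul, Real.norm_eq_abs]
    convert ((hy.inv₀ hx.ne').sub_const s⁻¹).abs.mul hy using 2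
    simp
  have hsum : Tendsto (fun a => ‖u + v a‖) l (𝓝 2) := by
    have hlower := hmain.sub herr
    have hupper := hmain.add herr
    rw [sub_zero] at hlower
    rw [add_zero] at hupper
    refine tendsto_of_tendsto_of_tendsto_of_le_of_le hlower hupper (fun a => ?_) (fun a => ?_)
    · simpa only [hsplit] using norm_sub_le_norm_add _ _
    · simpa only [hsplit] using norm_add_le _ _
  have hvu := hX.tendsto_of_tendsto_norm_add_of_norm_eq_one hu hv hsum
  have hyv : ∀ a, ‖y a‖ • v a = y a := fun a => by
    rcases eq_or_ne (y a) 0 with h | h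
    · simp [v, h]
    · exact smul_inv_smul₀ (norm_ne_zero_iff.2 h) _
  simpa [hyv, u, smul_inv_smul₀ hx.ne'] using hy.smul hvu

variable {p : ℝ}

theorem tendsto_of_tendsto_bregman (hX : LocallyUniformlyConvex X) (hp : 1 < p) {x : X}
    {j : StrongDual ℝ X} (hj : ∀ w, j w ≤ ‖w‖) (hjx : j x = ‖x‖) {z : α → X}
    (h : Tendsto (fun a => bregman p j x (z a)) l (𝓝 0)) :
    Tendsto z l (𝓝 x) := by
  set s := ‖x‖
  have hs : 0 ≤ s := norm_nonneg x
  have hψ := isStrictValley_rpow_sub_mul hp hs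
  have hψ_nonneg : ∀ a, 0 ≤ ‖z a‖ ^ p - p * s ^ (p - 1) * ‖z a‖ - (s ^ p - p * s ^ (p - 1) * s) :=
    fun a => sub_nonneg.2 (hψ.le_apply (norm_nonneg _))
  have hgap_nonneg : ∀ a, 0 ≤ p * s ^ (p - 1) * (‖z a‖ - j (z a)) :=
    fun a => mul_nonneg (by positivity) (sub_nonneg.2 (hj _))
  have hnorm : Tendsto (fun a => ‖z a‖) l (𝓝 s) := by
    refine hψ.tendsto_of_tendsto_apply (fun a => norm_nonneg _) (tendsto_sub_nhds_zero_iff.1 ?_)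
    exact squeeze_zero hψ_nonneg
      (fun a => by rw [bregman_eq]; linarith [hgap_nonneg a]) h
  refine hX.tendsto_of_tendsto_norm hnorm ?_
  rcases hs.eq_or_lt with hs0 | hs0
  · have hx0 : x = 0 := norm_eq_zero.1 hs0.symm
    simp only [hx0, zero_add, norm_zero, mul_zero]
    simpa [← hs0] using hnorm
  have hgap : Tendsto (fun a => ‖z a‖ - j (z a)) l (𝓝 0) := by
    have hc : 0 < p * s ^ (p - 1) := by positivity
    have := squeeze_zero hgap_nonneg (fun a => by rw [bregman_eq]; linarith [hψ_nonneg a]) h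
    simpa [mul_div_cancel_left₀ _ hc.ne'] using this.div_const (p * s ^ (p - 1))
  have hj_lim : Tendsto (fun a => s + j (z a)) l (𝓝 (2 * s)) := by
    convert (hnorm.sub hgap).const_add s using 1 <;> simp [two_mul]
  have hnorm_lim : Tendsto (fun a => s + ‖z a‖) l (𝓝 (2 * s)) := by
    simpa [two_mul] using hnorm.const_add s
  refine tendsto_of_tendsto_of_tendsto_of_le_of_le hj_lim hnorm_lim (fun a => ?_) (fun a => ?_)
  · simpa [hjx] using hj (x + z a)
  · exact norm_add_le _ _

theorem tendsto_of_tendsto_Kp (hX : LocallyUniformlyConvex X) (hp : 1 < p) {x : X} {y : α → X}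
    (h : Tendsto (fun a => Kp p x (y a)) l (𝓝 0)) : Tendsto y l (𝓝 x) := by
  set s := ‖x‖
  have hs : 0 ≤ s := norm_nonneg x
  have hG := isStrictValley_two_rpow_mul_add_sub hp hs
  have hGs := two_rpow_mul_add_self_sub_eq_zero p hs
  have hG_le : ∀ a, 2 ^ (p - 1) * (s ^ p + ‖y a‖ ^ p) - (s + ‖y a‖) ^ p ≤ Kp p x (y a) :=
    fun a => by
      have : ‖x + y a‖ ^ p ≤ (s + ‖y a‖) ^ p :=
        Real.rpow_le_rpow (norm_nonneg _) (norm_add_le _ _) (by linarith)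
      unfold Kp
      linarith
  have hnorm : Tendsto (fun a => ‖y a‖) l (𝓝 s) := by
    refine hG.tendsto_of_tendsto_apply (fun a => norm_nonneg _) ?_
    rw [hGs]
    exact squeeze_zero (fun a => hGs ▸ hG.le_apply (norm_nonneg _)) hG_le h
  have hpow : Tendsto (fun a => ‖x + y a‖ ^ p) l (𝓝 ((s + s) ^ p)) := by
    have := (((hnorm.rpow_const (p := p) (Or.inr (by linarith))).const_add (s ^ p)).const_mul
      (2 ^ (p - 1))).sub h
    rw [sub_zero, sub_eq_zero.1 hGs] at this
    refine this.congr fun a => ?_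
    unfold Kp
    ring
  refine hX.tendsto_of_tendsto_norm hnorm ?_
  have hroot := hpow.rpow_const (p := p⁻¹) (Or.inr (by positivity))
  rw [Real.rpow_rpow_inv (by positivity) (by positivity), ← two_mul] at hroot
  refine hroot.congr fun a => ?_
  exact Real.rpow_rpow_inv (norm_nonneg _) (by positivity)

end LocallyUniformlyConvex

theorem abs_rpow_sub_rpow_le {p : ℝ} (hp : 1 < p) {u v M : ℝ} (hu : 0 ≤ u) (hv : 0 ≤ v)
    (huM : u ≤ M) (hvM : v ≤ M) : |u ^ p - v ^ p| ≤ p * M ^ (p - 1) * |u - v| := by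
  wlog hvu : v ≤ u generalizing u v
  · rw [abs_sub_comm, abs_sub_comm u]
    exact this hv hu hvM huM (le_of_not_ge hvu)
  have htangent := rpow_add_mul_sub_le_rpow hp hu hv
  have hpow : u ^ (p - 1) ≤ M ^ (p - 1) := Real.rpow_le_rpow hu huM (by linarith)
  rw [abs_of_nonneg (sub_nonneg.2 (Real.rpow_le_rpow hv hvu (by linarith))),
    abs_of_nonneg (sub_nonneg.2 hvu)]
  nlinarith [mul_le_mul_of_nonneg_right hpow (sub_nonneg.2 hvu)]

theorem le_rpow_add_one {p : ℝ} (hp : 1 ≤ p) {t : ℝ} (ht : 0 ≤ t) : t ≤ t ^ p + 1 := by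
  rcases le_total t 1 with h | h
  · linarith [Real.rpow_nonneg ht p]
  · linarith [Real.self_le_rpow_of_one_le h hp]

section Transfer

variable {X : Type*} [NormedAddCommGroup X] {α : Type*} {l : Filter α} {p : ℝ}

theorem eventually_norm_le_of_tendsto_Kp (hp : 1 < p) {x : X} {z y : α → X}
    (hz : Tendsto z l (𝓝 x)) (hK : Tendsto (fun a => Kp p (z a) (y a)) l (𝓝 0)) :
    ∃ R, ∀ᶠ a in l, ‖y a‖ ≤ R := by
  obtain ⟨c, hc, C, hcoercive⟩ := exists_mul_rpow_le_Kp (X := X) hp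
  have hbound : Tendsto (fun a => Kp p (z a) (y a) + C * ‖z a‖ ^ p) l (𝓝 (C * ‖x‖ ^ p)) := by
    simpa using hK.add ((hz.norm.rpow_const (Or.inr (by linarith))).const_mul C)
  refine ⟨(C * ‖x‖ ^ p + 1) / c + 1, ?_⟩
  filter_upwards [hbound.eventually (gt_mem_nhds (lt_add_one _))] with a ha
  have := le_rpow_add_one hp.le (norm_nonneg (y a))
  have : ‖y a‖ ^ p ≤ (C * ‖x‖ ^ p + 1) / c := by
    rw [le_div_iff₀ hc]
    linarith [hcoercive (z a) (y a)]
  linarith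

theorem tendsto_Kp_of_tendsto (hp : 1 < p) {x : X} {z y : α → X} (hz : Tendsto z l (𝓝 x))
    (hK : Tendsto (fun a => Kp p (z a) (y a)) l (𝓝 0)) :
    Tendsto (fun a => Kp p x (y a)) l (𝓝 0) := by
  obtain ⟨R, hR⟩ := eventually_norm_le_of_tendsto_Kp hp hz hK
  set M := ‖x‖ + 1 + R
  have hz_norm : Tendsto (fun a => ‖z a‖ ^ p) l (𝓝 (‖x‖ ^ p)) :=
    hz.norm.rpow_const (Or.inr (by linarith))
  have hdist : Tendsto (fun a => ‖z a - x‖) l (𝓝 0) := tendsto_iff_norm_sub_tendsto_zero.1 hz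
  have hsum_pow : Tendsto (fun a => ‖z a + y a‖ ^ p - ‖x + y a‖ ^ p) l (𝓝 0) := by
    have hlim : Tendsto (fun a => p * M ^ (p - 1) * ‖z a - x‖) l (𝓝 0) := by
      simpa using hdist.const_mul (p * M ^ (p - 1))
    refine squeeze_zero_norm' ?_ hlim
    filter_upwards [hR, hz.norm.eventually (gt_mem_nhds (lt_add_one ‖x‖))] with a hya hza
    rw [Real.norm_eq_abs]
    refine (abs_rpow_sub_rpow_le (M := M) hp (norm_nonneg _) (norm_nonneg _) ?_ ?_).trans ?_
    · linarith [norm_add_le (z a) (y a)]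
    · linarith [norm_add_le x (y a)]
    · have hM : 0 ≤ M := by linarith [norm_nonneg (y a), norm_nonneg x]
      refine mul_le_mul_of_nonneg_left ?_ (by positivity)
      simpa using abs_norm_sub_norm_le (z a + y a) (x + y a)
  have := (hK.add (((tendsto_const_nhds (x := ‖x‖ ^ p)).sub hz_norm).const_mul
    (2 ^ (p - 1)))).add hsum_pow
  rw [sub_self, mul_zero, add_zero, add_zero] at this
  refine this.congr fun a => ?_
  unfold Kp
  ring

end Transfer

section ConvexEnvelope

variable {X : Type*} [NormedAddCommGroup X] [NormedSpace ℝ X] {h φ : X → ℝ}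

theorem ConvexOn.le_sum_mul_of_le (hφ : ConvexOn ℝ univ φ) (hφh : ∀ z, φ z ≤ h z) {m : ℕ}
    {l : Fin m → ℝ} {z : Fin m → X} (hl : ∀ i, 0 < l i) (hl1 : ∑ i, l i = 1) :
    φ (∑ i, l i • z i) ≤ ∑ i, l i * h (z i) :=
  (hφ.map_sum_le (fun i _ => (hl i).le) hl1 fun _ _ => mem_univ _).trans
    (Finset.sum_le_sum fun i _ => mul_le_mul_of_nonneg_left (hφh _) (hl i).le)

theorem le_convEnv (hφ : ConvexOn ℝ univ φ) (hφh : ∀ z, φ z ≤ h z) (x : X) :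
    φ x ≤ convEnv h x :=
  le_csInf ⟨h x, 1, fun _ => 1, fun _ => x, by simp⟩ <| by
    rintro _ ⟨m, l, z, hl, hl1, rfl, rfl⟩
    exact hφ.le_sum_mul_of_le hφh hl hl1

theorem convEnv_le (hφ : ConvexOn ℝ univ φ) (hφh : ∀ z, φ z ≤ h z) (x : X) :
    convEnv h x ≤ h x :=
  csInf_le ⟨φ x, by
    rintro _ ⟨m, l, z, hl, hl1, rfl, rfl⟩
    exact hφ.le_sum_mul_of_le hφh hl hl1⟩ ⟨1, fun _ => 1, fun _ => x, by simp⟩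

theorem exists_lt_add_of_convEnv_le (ℓ : StrongDual ℝ X) {c η : ℝ} {x : X}
    (hx : convEnv h x ≤ c + ℓ x) (hη : 0 < η) : ∃ z, h z < c + ℓ z + η := by
  by_contra! hall
  have := le_convEnv (h := h) ((ℓ.toLinearMap.convexOn convex_univ).add_const (c + η))
    (fun z => by simp only [Pi.add_apply, ContinuousLinearMap.coe_coe]; linarith [hall z]) x
  simp only [Pi.add_apply, ContinuousLinearMap.coe_coe] at this
  linarith

theorem convexOn_univ_add_mul_rpow_norm {p : ℝ} (hp : 1 ≤ p) (c : ℝ) {C : ℝ} (hC : 0 ≤ C) :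
    ConvexOn ℝ univ fun x : X => c + C * ‖x‖ ^ p := by
  refine ⟨convex_univ, fun x _ y _ a b ha hb hab => ?_⟩
  have hpow : ‖a • x + b • y‖ ^ p ≤ a * ‖x‖ ^ p + b * ‖y‖ ^ p := calc
    ‖a • x + b • y‖ ^ p ≤ (a * ‖x‖ + b * ‖y‖) ^ p := by
      refine Real.rpow_le_rpow (norm_nonneg _) ((norm_add_le _ _).trans_eq ?_) (by linarith)
      rw [norm_smul, norm_smul, Real.norm_of_nonneg ha, Real.norm_of_nonneg hb]
    _ ≤ a * ‖x‖ ^ p + b * ‖y‖ ^ p :=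
      (convexOn_rpow hp).2 (norm_nonneg x) (norm_nonneg y) ha hb hab
  have hc : a * c + b * c = c := by rw [← add_mul, hab, one_mul]
  simp only [smul_eq_mul]
  nlinarith [mul_le_mul_of_nonneg_left hpow hC]

end ConvexEnvelope

theorem LowerSemicontinuous.le_of_tendsto {X α γ : Type*} [TopologicalSpace X] [LinearOrder γ]
    [DenselyOrdered γ] [TopologicalSpace γ] [OrderTopology γ] {f : X → γ}
    (hf : LowerSemicontinuous f) {l : Filter α} [l.NeBot] {y : α → X} {x : X}
    (hy : Tendsto y l (𝓝 x)) {u : α → γ} {c : γ} (hu : Tendsto u l (𝓝 c))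
    (hfu : ∀ᶠ a in l, f (y a) ≤ u a) : f x ≤ c := by
  by_contra! hc
  obtain ⟨d, hcd, hdf⟩ := exists_between hc
  obtain ⟨a, hda, hau, hud⟩ :=
    ((hy.eventually (hf x d hdf)).and (hfu.and (hu.eventually (gt_mem_nhds hcd)))).exists
  exact lt_irrefl d ((hda.trans_le hau).trans hud)

section DeltaBounds

variable {X : Type*} [NormedAddCommGroup X] {p μ : ℝ} {f : X → EReal} {n : ℕ}

theorem coe_le_iInf_add_Kp (hp : 1 < p) (hμ : ∀ y, (μ : EReal) ≤ f y) (x : X) :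
    (μ : EReal) ≤ ⨅ y, f y + (((n : ℝ) * Kp p x y : ℝ) : EReal) :=
  le_iInf fun y => (hμ y).trans <| le_add_of_nonneg_right <|
    EReal.coe_nonneg.2 (mul_nonneg n.cast_nonneg (Kp_nonneg hp x y))

theorem iInf_add_Kp_le [NormedSpace ℝ X] (x : X) :
    (⨅ y, f y + (((n : ℝ) * Kp p x y : ℝ) : EReal)) ≤ f x :=
  (iInf_le _ x).trans_eq (by rw [Kp_self, mul_zero, EReal.coe_zero, add_zero])

theorem iInf_add_Kp_ne_top (hproper : ∃ x, f x ≠ ⊤) (x : X) :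
    (⨅ y, f y + (((n : ℝ) * Kp p x y : ℝ) : EReal)) ≠ ⊤ := by
  obtain ⟨x₀, hx₀⟩ := hproper
  exact ((iInf_le _ x₀).trans_lt (EReal.add_lt_top hx₀ (EReal.coe_ne_top _))).ne

theorem le_gnp (hp : 1 < p) (hμ : ∀ y, (μ : EReal) ≤ f y) (hproper : ∃ x, f x ≠ ⊤) (x : X) :
    μ + 2 ^ (p - 1) * n * ‖x‖ ^ p ≤ gnp p f n x := by
  have := EReal.toReal_le_toReal (coe_le_iInf_add_Kp (n := n) hp hμ x) (EReal.coe_ne_bot μ)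
    (iInf_add_Kp_ne_top hproper x)
  rw [EReal.toReal_coe] at this
  unfold gnp
  linarith

theorem le_Delta [NormedSpace ℝ X] (hp : 1 < p) (hμ : ∀ y, (μ : EReal) ≤ f y)
    (hproper : ∃ x, f x ≠ ⊤) (x : X) :
    μ ≤ Delta p f n x := by
  have hconvex := convexOn_univ_add_mul_rpow_norm (X := X) hp.le μ
    (by positivity : (0 : ℝ) ≤ 2 ^ (p - 1) * n)
  have := le_convEnv hconvex (le_gnp hp hμ hproper) x
  unfold Delta
  linarith

theorem Delta_le [NormedSpace ℝ X] (hp : 1 < p) (hμ : ∀ y, (μ : EReal) ≤ f y)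
    (hproper : ∃ x, f x ≠ ⊤) (x : X) :
    (Delta p f n x : EReal) ≤ f x := by
  rcases eq_or_ne (f x) ⊤ with hfx | hfx
  · exact hfx ▸ le_top
  have hconvex := convexOn_univ_add_mul_rpow_norm (X := X) hp.le μ
    (by positivity : (0 : ℝ) ≤ 2 ^ (p - 1) * n)
  have henv := convEnv_le hconvex (le_gnp hp hμ hproper) x
  have hinf := EReal.toReal_le_toReal (iInf_add_Kp_le (p := p) (n := n) x)
    ((EReal.coe_ne_bot μ).bot_lt.trans_le (coe_le_iInf_add_Kp hp hμ x)).ne' hfx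
  rw [← EReal.coe_toReal hfx ((EReal.coe_ne_bot μ).bot_lt.trans_le (hμ x)).ne',
    EReal.coe_le_coe_iff]
  have hgnp : gnp p f n x
      = (⨅ y, f y + (((n : ℝ) * Kp p x y : ℝ) : EReal)).toReal + 2 ^ (p - 1) * n * ‖x‖ ^ p :=
    rfl
  unfold Delta
  linarith

end DeltaBounds

section Minimizers

variable {X : Type*} [NormedAddCommGroup X] [NormedSpace ℝ X] {p μ : ℝ} {f : X → EReal} {n : ℕ}

theorem exists_near_of_Delta_eq (hp : 1 < p) (hμ : ∀ y, (μ : EReal) ≤ f y)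
    (hproper : ∃ x, f x ≠ ⊤) {x : X} (hx : Delta p f n x = μ) {j : StrongDual ℝ X}
    (hj : ∀ w, j w ≤ ‖w‖) (hjx : j x = ‖x‖) {η : ℝ} (hη : 0 < η) :
    ∃ z y : X, 2 ^ (p - 1) * n * bregman p j x z < η ∧ n * Kp p z y < η ∧
      f y < ((μ + η : ℝ) : EReal) := by
  set C : ℝ := 2 ^ (p - 1) * n
  set s := ‖x‖
  -- the tangent at `x` of the convex minorant `μ + C ‖·‖ ^ p` of `gnp` meets its envelope at `x`
  obtain ⟨z, hz⟩ := exists_lt_add_of_convEnv_le (h := gnp p f n) (x := x)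
    ((C * (p * s ^ (p - 1))) • j) (c := μ + C * (s ^ p - p * s ^ (p - 1) * s)) (by
      simp only [FunLike.coe_smul, Pi.smul_apply, smul_eq_mul, hjx]
      unfold Delta at hx
      linarith) hη
  set I := ⨅ y, f y + (((n : ℝ) * Kp p z y : ℝ) : EReal)
  have hIμ : (μ : EReal) ≤ I := coe_le_iInf_add_Kp hp hμ z
  have hCB : 0 ≤ C * bregman p j x z := mul_nonneg (by positivity) (bregman_nonneg hp hj x z)
  have hgnp : gnp p f n z = I.toReal + C * ‖z‖ ^ p := rfl
  have hμI : μ ≤ I.toReal := by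
    simpa using EReal.toReal_le_toReal hIμ (EReal.coe_ne_bot μ) (iInf_add_Kp_ne_top hproper z)
  simp only [FunLike.coe_smul, Pi.smul_apply, smul_eq_mul] at hz
  have hsplit : I.toReal - μ + C * bregman p j x z < η := by
    unfold bregman
    linarith
  have hI_ne_bot : I ≠ ⊥ := ((EReal.coe_ne_bot μ).bot_lt.trans_le hIμ).ne'
  have hIlt : I < ((μ + η : ℝ) : EReal) := by
    have hI_ne_top : I ≠ ⊤ := iInf_add_Kp_ne_top hproper z
    rw [← EReal.coe_toReal hI_ne_top hI_ne_bot, EReal.coe_lt_coe_iff]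
    linarith
  obtain ⟨y, hy⟩ := iInf_lt_iff.1 hIlt
  have hK : 0 ≤ (n : ℝ) * Kp p z y := mul_nonneg n.cast_nonneg (Kp_nonneg hp z y)
  refine ⟨z, y, by linarith, ?_, (le_add_of_nonneg_right (EReal.coe_nonneg.2 hK)).trans_lt hy⟩
  have := (add_le_add_left (hμ y) _).trans_lt hy
  rw [← EReal.coe_add, EReal.coe_lt_coe_iff] at this
  linarith

theorem LocallyUniformlyConvex.le_of_Delta_eq (hX : LocallyUniformlyConvex X) (hp : 1 < p)
    (hlsc : LowerSemicontinuous f) (hμ : ∀ y, (μ : EReal) ≤ f y) (hproper : ∃ x, f x ≠ ⊤)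
    (hn : 0 < n) {x : X} (hx : Delta p f n x = μ) : f x ≤ μ := by
  obtain ⟨j, hj_norm, hjx⟩ := exists_dual_vector'' ℝ x
  have hj : ∀ w, j w ≤ ‖w‖ := fun w =>
    (le_abs_self _).trans (by simpa using j.le_of_opNorm_le hj_norm w)
  have hη : Tendsto (fun k : ℕ => 1 / ((k : ℝ) + 1)) atTop (𝓝 0) :=
    tendsto_one_div_add_atTop_nhds_zero_nat
  choose z y hB hK hf using fun k : ℕ =>
    exists_near_of_Delta_eq hp hμ hproper hx hj hjx (Nat.one_div_pos_of_nat (n := k))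
  have hη_div : ∀ {C : ℝ}, 0 < C → Tendsto (fun k : ℕ => 1 / ((k : ℝ) + 1) / C) atTop (𝓝 0) :=
    fun {C} _ => zero_div C ▸ hη.div_const C
  have hC : (0 : ℝ) < 2 ^ (p - 1) * n := by positivity
  have hz : Tendsto z atTop (𝓝 x) :=
    hX.tendsto_of_tendsto_bregman hp hj hjx <| squeeze_zero (fun k => bregman_nonneg hp hj x (z k))
      (fun k => (le_div_iff₀ hC).2 (mul_comm (2 ^ (p - 1) * n : ℝ) _ ▸ (hB k).le)) (hη_div hC)
  have hn' : (0 : ℝ) < n := by positivity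
  have hy : Tendsto y atTop (𝓝 x) :=
    hX.tendsto_of_tendsto_Kp hp <| tendsto_Kp_of_tendsto hp hz <|
      squeeze_zero (fun k => Kp_nonneg hp (z k) (y k))
        (fun k => (le_div_iff₀ hn').2 (mul_comm (n : ℝ) _ ▸ (hK k).le)) (hη_div hn')
  have hu : Tendsto (fun k : ℕ => ((μ + 1 / ((k : ℝ) + 1) : ℝ) : EReal)) atTop (𝓝 μ) :=
    (continuous_coe_real_ereal.tendsto μ).comp (by simpa using hη.const_add μ)
  exact hlsc.le_of_tendsto hy hu (Eventually.of_forall fun k => (hf k).le)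

end Minimizers

theorem stmt_0_general {X : Type*} [NormedAddCommGroup X] [NormedSpace ℝ X]
    (hLUR : ∀ x : X, ‖x‖ = 1 → ∀ ε : ℝ, 0 < ε → ∃ δ : ℝ, 0 < δ ∧
      ∀ y : X, ‖y‖ = 1 → ε ≤ ‖x - y‖ → ‖x + y‖ / 2 ≤ 1 - δ)
    (p : ℝ) (hp : 1 < p)
    (f : X → EReal)
    (hproper : ∃ x, f x ≠ ⊤)
    (hlsc : LowerSemicontinuous f)
    (hbdd : ∃ m : ℝ, ∀ x, (m : EReal) ≤ f x)
    (n : ℕ) (hn : 0 < n) :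
    (∀ x : X, (⨅ z, f z) ≤ (Delta p f n x : EReal) ∧ (Delta p f n x : EReal) ≤ f x) ∧
    {x : X | Delta p f n x = ⨅ z, Delta p f n z} = {x : X | f x = ⨅ z, f z} := by
  obtain ⟨μ, hμ_eq⟩ : ∃ μ : ℝ, (μ : EReal) = ⨅ z, f z := by
    obtain ⟨m, hm⟩ := hbdd
    obtain ⟨x₀, hx₀⟩ := hproper
    exact ⟨_, EReal.coe_toReal ((iInf_le f x₀).trans_lt hx₀.lt_top).ne
      ((EReal.coe_ne_bot m).bot_lt.trans_le (le_iInf hm)).ne'⟩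
  have hμ : ∀ y, (μ : EReal) ≤ f y := fun y => hμ_eq ▸ iInf_le f y
  have hDelta_inf : ⨅ z, Delta p f n z = μ := by
    refine ciInf_eq_of_forall_ge_of_forall_gt_exists_lt (le_Delta hp hμ hproper) fun w hw => ?_
    obtain ⟨z, hz⟩ := iInf_lt_iff.1 (hμ_eq ▸ EReal.coe_lt_coe_iff.2 hw)
    exact ⟨z, EReal.coe_lt_coe_iff.1 ((Delta_le hp hμ hproper z).trans_lt hz)⟩
  refine ⟨fun x => ⟨hμ_eq ▸ EReal.coe_le_coe_iff.2 (le_Delta hp hμ hproper x),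
    Delta_le hp hμ hproper x⟩, ?_⟩
  ext x
  simp only [mem_ofPred_eq, hDelta_inf, ← hμ_eq]
  constructor
  · intro hx
    exact le_antisymm ((show LocallyUniformlyConvex X from hLUR).le_of_Delta_eq hp hlsc hμ
      hproper hn hx) (hμ x)
  · intro hx
    exact le_antisymm (EReal.coe_le_coe_iff.1 (hx ▸ Delta_le hp hμ hproper x))
      (le_Delta hp hμ hproper x)

/-- For a Banach space whose norm is locally uniformly convex and uniformly smooth,
`p > 1` and `f` proper, lower semicontinuous and bounded below:
`inf f ≤ Δ_n^p f ≤ f` and the minimizers of `Δ_n^p f` are exactly those of `f`. -/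
theorem stmt_0 {X : Type*} [NormedAddCommGroup X] [NormedSpace ℝ X] [CompleteSpace X]
    (hLUR : ∀ x : X, ‖x‖ = 1 → ∀ ε : ℝ, 0 < ε → ∃ δ : ℝ, 0 < δ ∧
      ∀ y : X, ‖y‖ = 1 → ε ≤ ‖x - y‖ → ‖x + y‖ / 2 ≤ 1 - δ)
    (hUS : Filter.Tendsto
      (fun τ : ℝ => (sSup {r : ℝ | ∃ x y : X, ‖x‖ = 1 ∧ ‖y‖ = 1 ∧
        r = (‖x + τ • y‖ + ‖x - τ • y‖) / 2 - 1}) / τ)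
      (nhdsWithin 0 (Set.Ioi (0 : ℝ))) (nhds 0))
    (p : ℝ) (hp : 1 < p)
    (f : X → EReal)
    (hproper : ∃ x, f x ≠ ⊤)
    (hlsc : LowerSemicontinuous f)
    (hbdd : ∃ m : ℝ, ∀ x, (m : EReal) ≤ f x)
    (n : ℕ) (hn : 0 < n) :
    (∀ x : X, (⨅ z, f z) ≤ (Delta p f n x : EReal) ∧ (Delta p f n x : EReal) ≤ f x) ∧
    {x : X | Delta p f n x = ⨅ z, Delta p f n z} = {x : X | f x = ⨅ z, f z} :=
  stmt_0_general hLUR p hp f hproper hlsc hbdd n hn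
end

section
/- Let X be a real Banach space, let K : X×X → ℝ be a kernel satisfying conditions (1)–(5), and let f : X → ℝ ∪ {+∞} be proper, lower semicontinuous and bounded below. Then for every n ∈ ℕ, inf_X I_{K,n} f = inf_X f and the set of minimizers of I_{K,n} f equals the set of minimizers of f, i.e. {x : I_{K,n} f(x) = inf_X f} = {x : f(x) = inf_X f}. -/
open scoped BigOperators

/-- Let `K` be a kernel satisfying conditions (1)–(5) and let `f` be proper,
lower semicontinuous and bounded below. Then `inf I_{K,n} f = inf f` and the set of
minimizers of `I_{K,n} f` equals the set of minimizers of `f`. -/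
theorem stmt_6 {X : Type*} [NormedAddCommGroup X] [NormedSpace ℝ X] [CompleteSpace X]
    (K : X → X → ℝ)
    (hK1 : (∀ x y : X, 0 ≤ K x y) ∧ ∀ x : X, K x x = 0)
    (hK2 : ∀ x y : X, K x y = K y x)
    (hK3 : ∀ r M : ℝ, 0 < r → 0 < M → ∃ R : ℝ, ∀ x y : X, ‖x‖ ≤ r → R ≤ ‖y‖ → M ≤ K x y)
    (hK4 : ∀ s : Set (X × X), Bornology.IsBounded s →
      UniformContinuousOn (fun q : X × X => K q.1 q.2) s)
    (hK5 : ∀ x₀ : X, ∀ δ : ℝ, 0 < δ → ∃ C : ℝ, 0 < C ∧ ∀ y : X, δ ≤ ‖x₀ - y‖ → C ≤ K x₀ y)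
    (f : X → EReal)
    (hproper : ∃ x, f x ≠ ⊤)
    (hlsc : LowerSemicontinuous f)
    (hbdd : ∃ m : ℝ, ∀ x, (m : EReal) ≤ f x)
    (n : ℕ) (hn : 0 < n) :
    (⨅ x, ⨅ y, f y + (((n : ℝ) * K x y : ℝ) : EReal)) = (⨅ x, f x) ∧
    {x : X | (⨅ y, f y + (((n : ℝ) * K x y : ℝ) : EReal)) = ⨅ z, f z} =
      {x : X | f x = ⨅ z, f z} := by
  obtain ⟨hK1a, hK1b⟩ := hK1
  obtain ⟨m, hm⟩ := hbdd
  obtain ⟨x₀, hx₀⟩ := hproper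
  have hAle : ∀ y, (⨅ z, f z) ≤ f y := fun y => iInf_le _ y
  have hnK : ∀ x y : X, (0 : EReal) ≤ (((n : ℝ) * K x y : ℝ) : EReal) := by
    intro x y
    exact_mod_cast mul_nonneg (by positivity) (hK1a x y)
  have hgle : ∀ x, (⨅ y, f y + (((n : ℝ) * K x y : ℝ) : EReal)) ≤ f x := by
    intro x
    have h := iInf_le (fun y => f y + (((n : ℝ) * K x y : ℝ) : EReal)) x
    simpa [hK1b x] using h
  have hAleg : ∀ x, (⨅ z, f z) ≤ (⨅ y, f y + (((n : ℝ) * K x y : ℝ) : EReal)) := by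
    intro x
    refine le_iInf fun y => ?_
    calc (⨅ z, f z) ≤ f y := hAle y
    _ ≤ f y + (((n : ℝ) * K x y : ℝ) : EReal) := le_add_of_nonneg_right (hnK x y)
  -- A is a real number
  have hAbot : (m : EReal) ≤ ⨅ z, f z := le_iInf hm
  have hAtop : (⨅ z, f z) ≠ ⊤ := fun h => hx₀ (top_le_iff.1 (h ▸ hAle x₀))
  obtain ⟨a, ha⟩ : ∃ a : ℝ, (⨅ z, f z) = (a : EReal) := by
    refine ⟨(⨅ z, f z).toReal, ?_⟩
    rw [EReal.coe_toReal hAtop]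
    intro h
    rw [h] at hAbot
    exact (not_le.2 (EReal.bot_lt_coe m)) hAbot
  have key : ∀ x : X, (⨅ y, f y + (((n : ℝ) * K x y : ℝ) : EReal)) = (⨅ z, f z) →
      f x = ⨅ z, f z := by
    intro x hx
    by_contra hne
    have hlt : (⨅ z, f z) < f x := lt_of_le_of_ne (hAle x) (Ne.symm hne)
    obtain ⟨c, hc1, hc2⟩ := EReal.exists_between_coe_real hlt
    have hca : a < c := by
      rw [ha] at hc1; exact_mod_cast hc1
    -- lsc gives a ball where f > c
    have hev : ∀ᶠ y in nhds x, (c : EReal) < f y := hlsc x _ hc2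
    obtain ⟨δ, hδ, hball⟩ := Metric.eventually_nhds_iff.1 hev
    obtain ⟨C, hC, hCK⟩ := hK5 x δ hδ
    set b : ℝ := min c (a + n * C) with hb
    have hab : a < b := lt_min hca (by nlinarith [show (1:ℝ) ≤ (n:ℝ) from Nat.one_le_cast.2 hn])
    have hble : (b : EReal) ≤ ⨅ y, f y + (((n : ℝ) * K x y : ℝ) : EReal) := by
      refine le_iInf fun y => ?_
      by_cases hy : ‖x - y‖ < δ
      · have hyd : dist y x < δ := by
          rw [dist_eq_norm, norm_sub_rev]; exact hy
        have hfy : (c : EReal) < f y := hball hyd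
        calc (b : EReal) ≤ (c : EReal) := by exact_mod_cast min_le_left _ _
        _ ≤ f y := le_of_lt hfy
        _ ≤ f y + (((n : ℝ) * K x y : ℝ) : EReal) := le_add_of_nonneg_right (hnK x y)
      · have hKy : C ≤ K x y := hCK y (not_lt.1 hy)
        have h1 : ((n : ℝ) * C : ℝ) ≤ ((n : ℝ) * K x y : ℝ) := by
          apply mul_le_mul_of_nonneg_left hKy (by positivity)
        calc (b : EReal) ≤ ((a + n * C : ℝ) : EReal) := by
              exact_mod_cast min_le_right _ _
        _ = (a : EReal) + (((n : ℝ) * C : ℝ) : EReal) := by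
              rw [← EReal.coe_add]
        _ ≤ f y + (((n : ℝ) * K x y : ℝ) : EReal) := by
              apply add_le_add (ha ▸ hAle y)
              exact_mod_cast h1
    rw [hx, ha] at hble
    exact absurd hble (not_le.2 (by exact_mod_cast hab))
  constructor
  · exact le_antisymm (le_trans (iInf_mono hgle) le_rfl) (le_iInf hAleg)
  · ext x
    simp only [Set.mem_setOf_eq]
    constructor
    · exact key x
    · intro hx
      exact le_antisymm (hx ▸ hgle x) (hAleg x)
end

section
/- Let X be a real Banach space, let K : X×X → ℝ be a kernel satisfying conditions (1)–(5), and let f : X → ℝ ∪ {+∞} be proper, lower semicontinuous and bounded below. Then for every n ∈ ℕ the real-valued function I_{K,n} f is uniformly continuous on every bounded subset of X; if moreover K is Lipschitz continuous on bounded subsets of X × X, then I_{K,n} f is Lipschitz continuous on every bounded subset of X. -/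
open scoped BigOperators

/-- A function uniformly continuous on a closed ball (of a real normed space)
is bounded above on it. -/
lemma bdd_of_uc {E : Type*} [NormedAddCommGroup E] [NormedSpace ℝ E]
    (g : E → ℝ) (r : ℝ)
    (h : UniformContinuousOn g (Metric.closedBall 0 r)) (hr : 0 ≤ r) :
    ∃ B : ℝ, ∀ q ∈ Metric.closedBall (0 : E) r, g q ≤ g 0 + B := by
  obtain ⟨δ, hδ, hδ'⟩ := Metric.uniformContinuousOn_iff.1 h 1 one_pos
  set N : ℕ := ⌈r / δ⌉₊ + 1 with hN
  refine ⟨(N : ℝ), fun q hq => ?_⟩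
  have hNpos : (0 : ℝ) < N := by positivity
  have hqr : ‖q‖ ≤ r := by simpa [Metric.mem_closedBall] using hq
  have hrN : r / N < δ := by
    rw [div_lt_iff₀ hNpos]
    have h1 : r / δ < (N : ℝ) := by
      calc r / δ ≤ (⌈r / δ⌉₊ : ℝ) := Nat.le_ceil _
        _ < (N : ℝ) := by rw [hN]; push_cast; linarith
    calc r = (r / δ) * δ := by field_simp
      _ < (N : ℝ) * δ := mul_lt_mul_of_pos_right h1 hδ
      _ = δ * N := mul_comm _ _
  set c : ℕ → E := fun i => ((i : ℝ) / (N : ℝ)) • q with hc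
  have hmem : ∀ i : ℕ, i ≤ N → c i ∈ Metric.closedBall (0 : E) r := by
    intro i hi
    rw [Metric.mem_closedBall, dist_zero_right, hc]
    simp only [norm_smul, Real.norm_eq_abs]
    have h1 : |(i : ℝ) / (N : ℝ)| ≤ 1 := by
      rw [abs_of_nonneg (by positivity), div_le_one hNpos]
      exact_mod_cast hi
    calc |(i : ℝ) / (N : ℝ)| * ‖q‖ ≤ 1 * r :=
          mul_le_mul h1 hqr (norm_nonneg _) zero_le_one
      _ = r := one_mul r
  have hstep : ∀ i : ℕ, dist (c (i + 1)) (c i) < δ := by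
    intro i
    rw [dist_eq_norm, hc]
    have : ((((i + 1 : ℕ) : ℝ)) / (N : ℝ)) • q - ((i : ℝ) / (N : ℝ)) • q
        = ((1 : ℝ) / (N : ℝ)) • q := by
      rw [← sub_smul]; congr 1; push_cast; ring
    rw [this]
    simp only [norm_smul, Real.norm_eq_abs]
    have h1 : |(1 : ℝ) / (N : ℝ)| = 1 / N := abs_of_nonneg (by positivity)
    calc |(1 : ℝ) / (N : ℝ)| * ‖q‖ ≤ (1 / N) * r := by
          rw [h1]; exact mul_le_mul_of_nonneg_left hqr (by positivity)
      _ = r / N := by ring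
      _ < δ := hrN
  have hind : ∀ i : ℕ, i ≤ N → |g (c i) - g 0| ≤ (i : ℝ) := by
    intro i
    induction i with
    | zero =>
      intro _
      have : c 0 = 0 := by simp [hc]
      simp [this]
    | succ i ih =>
      intro hi
      have hi' : i ≤ N := Nat.le_of_succ_le hi
      have h1 : |g (c (i + 1)) - g (c i)| < 1 := by
        have := hδ' (c (i + 1)) (hmem _ hi) (c i) (hmem _ hi') (hstep i)
        rwa [Real.dist_eq] at this
      calc |g (c (i + 1)) - g 0| ≤ |g (c (i + 1)) - g (c i)| + |g (c i) - g 0| := by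
            have := abs_sub_le (g (c (i+1))) (g (c i)) (g 0); linarith [abs_sub_le (g (c (i+1))) (g (c i)) (g 0)]
        _ ≤ 1 + (i : ℝ) := add_le_add h1.le (ih hi')
        _ = ((i + 1 : ℕ) : ℝ) := by push_cast; ring
  have hcN : c N = q := by
    rw [hc]
    have : (N : ℝ) / (N : ℝ) = 1 := div_self (ne_of_gt hNpos)
    simp [this]
  have := hind N le_rfl
  rw [hcN] at this
  have := abs_sub_le_iff.1 this
  linarith [this.1]

lemma core_compare {X : Type*} [NormedAddCommGroup X] [NormedSpace ℝ X]
    (K : X → X → ℝ) (hK0 : ∀ x y : X, 0 ≤ K x y) (hKd : ∀ x : X, K x x = 0)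
    (hK3 : ∀ r M : ℝ, 0 < r → 0 < M → ∃ R : ℝ, ∀ x y : X, ‖x‖ ≤ r → R ≤ ‖y‖ → M ≤ K x y)
    (hK4 : ∀ s : Set (X × X), Bornology.IsBounded s →
      UniformContinuousOn (fun q : X × X => K q.1 q.2) s)
    (f : X → EReal) (m : ℝ) (hm : ∀ x, (m : EReal) ≤ f x)
    (x₀ : X) (hx₀ : f x₀ ≠ ⊤)
    (n : ℕ) (hn : 0 < n)
    (r : ℝ) (hr : 1 ≤ r) (hx₀r : ‖x₀‖ ≤ r) :
    ∃ r' : ℝ, r ≤ r' ∧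
      ∀ (x x' : X) (c : ℝ), ‖x‖ ≤ r → ‖x'‖ ≤ r → 0 ≤ c →
        (∀ y : X, ‖y‖ ≤ r' → K x y ≤ K x' y + c) →
        (⨅ y, f y + (((n : ℝ) * K x y : ℝ) : EReal)).toReal ≤
          (⨅ y, f y + (((n : ℝ) * K x' y : ℝ) : EReal)).toReal + (n : ℝ) * c := by
  classical
  set T : X → X → EReal := fun x y => f y + (((n : ℝ) * K x y : ℝ) : EReal) with hT
  set I : X → EReal := fun x => ⨅ y, T x y with hI
  have hnpos : (0 : ℝ) < n := by exact_mod_cast hn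
  -- lower bound
  have hTlow : ∀ x y : X, (m : EReal) ≤ T x y := by
    intro x y
    have h1 : (0 : EReal) ≤ (((n : ℝ) * K x y : ℝ) : EReal) :=
      EReal.coe_nonneg.2 (mul_nonneg (by positivity) (hK0 x y))
    calc (m : EReal) = (m : EReal) + 0 := (add_zero _).symm
      _ ≤ f y + (((n : ℝ) * K x y : ℝ) : EReal) := add_le_add (hm y) h1
  have hIlow : ∀ x : X, (m : EReal) ≤ I x := fun x => le_iInf (hTlow x)
  -- f x₀ is real
  have hfx₀bot : f x₀ ≠ ⊥ := ((EReal.bot_lt_coe m).trans_le (hm x₀)).ne'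
  set u₀ : ℝ := (f x₀).toReal with hu₀
  have hfx₀ : f x₀ = (u₀ : EReal) := (EReal.coe_toReal hx₀ hfx₀bot).symm
  -- K bounded on closed ball of radius r in X × X
  obtain ⟨B, hB⟩ := bdd_of_uc (fun q : X × X => K q.1 q.2) r
    (hK4 _ Metric.isBounded_closedBall) (by linarith)
  have hKbd : ∀ x y : X, ‖x‖ ≤ r → ‖y‖ ≤ r → K x y ≤ B := by
    intro x y hx hy
    have hmem : ((x, y) : X × X) ∈ Metric.closedBall (0 : X × X) r := by
      rw [Metric.mem_closedBall, dist_zero_right]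
      exact max_le hx hy
    have := hB (x, y) hmem
    simpa [hKd] using this
  have h00 : ‖(0 : X)‖ ≤ r := by simp; linarith
  have hBnn : 0 ≤ B := by have := hKbd 0 0 h00 h00; rw [hKd 0] at this; exact this
  set U : ℝ := u₀ + n * B with hU
  -- upper bound for I on the ball of radius r
  have hIU : ∀ x : X, ‖x‖ ≤ r → I x ≤ (U : EReal) := by
    intro x hx
    have h1 : I x ≤ T x x₀ := iInf_le _ x₀
    have h2 : T x x₀ ≤ (U : EReal) := by
      rw [hT]
      simp only
      rw [hfx₀, ← EReal.coe_add, EReal.coe_le_coe_iff]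
      have := hKbd x x₀ hx hx₀r
      nlinarith
    exact h1.trans h2
  have hmU : m ≤ U := by
    have := (hIlow x₀).trans (hIU x₀ hx₀r)
    exact_mod_cast this
  -- choose R from hK3
  set M : ℝ := (U - m + 1) / n with hM
  have hMpos : 0 < M := div_pos (by linarith) hnpos
  obtain ⟨R, hR⟩ := hK3 r M (by linarith) hMpos
  refine ⟨max r R, le_max_left _ _, ?_⟩
  -- far away, T is at least U
  have hfar : ∀ x y : X, ‖x‖ ≤ r → max r R < ‖y‖ → (U : EReal) ≤ T x y := by
    intro x y hx hy
    have hKxy : M ≤ K x y := hR x y hx (le_of_lt ((le_max_right r R).trans_lt hy))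
    have h1 : (m : EReal) + (((n : ℝ) * M : ℝ) : EReal) ≤ T x y :=
      add_le_add (hm y) (EReal.coe_le_coe_iff.2 (by nlinarith))
    have h2 : ((m + n * M : ℝ) : EReal) = (m : EReal) + (((n : ℝ) * M : ℝ) : EReal) :=
      EReal.coe_add _ _
    have h3 : (U : EReal) ≤ ((m + n * M : ℝ) : EReal) := by
      rw [EReal.coe_le_coe_iff, hM]
      field_simp
      linarith
    exact h3.trans (h2.le.trans h1)
  -- finiteness
  have hfin : ∀ x : X, ‖x‖ ≤ r → I x = ((I x).toReal : EReal) := by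
    intro x hx
    exact (EReal.coe_toReal (((hIU x hx).trans_lt (EReal.coe_lt_top U)).ne)
      (((EReal.bot_lt_coe m).trans_le (hIlow x)).ne')).symm
  -- main comparison
  intro x x' c hx hx' hc hKc
  have key : ∀ y : X, I x ≤ T x' y + (((n : ℝ) * c : ℝ) : EReal) := by
    intro y
    rcases le_or_gt ‖y‖ (max r R) with hy | hy
    · have h1 : I x ≤ T x y := iInf_le _ y
      have h2 : T x y ≤ T x' y + (((n : ℝ) * c : ℝ) : EReal) := by
        rw [hT]
        simp only
        rw [add_assoc, ← EReal.coe_add]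
        exact add_le_add le_rfl (EReal.coe_le_coe_iff.2 (by nlinarith [hKc y hy]))
      exact h1.trans h2
    · have h1 : I x ≤ (U : EReal) := hIU x hx
      have h2 : (U : EReal) ≤ T x' y := hfar x' y hx' hy
      have h3 : T x' y ≤ T x' y + (((n : ℝ) * c : ℝ) : EReal) := by
        calc T x' y = T x' y + 0 := (add_zero _).symm
          _ ≤ T x' y + (((n : ℝ) * c : ℝ) : EReal) :=
            add_le_add le_rfl (EReal.coe_nonneg.2 (mul_nonneg (by positivity) hc))
      exact (h1.trans h2).trans h3
  have hsub : I x - (((n : ℝ) * c : ℝ) : EReal) ≤ I x' := by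
    refine le_iInf fun y => ?_
    exact (EReal.sub_le_iff_le_add (Or.inl (EReal.coe_ne_bot _))
      (Or.inl (EReal.coe_ne_top _))).2 (key y)
  have hfinal : I x ≤ I x' + (((n : ℝ) * c : ℝ) : EReal) :=
    (EReal.sub_le_iff_le_add (Or.inl (EReal.coe_ne_bot _))
      (Or.inl (EReal.coe_ne_top _))).1 hsub
  have hx1 := hfin x hx
  have hx2 := hfin x' hx'
  rw [hx1, hx2, ← EReal.coe_add, EReal.coe_le_coe_iff] at hfinal
  exact hfinal

/-- Let `K` be a kernel satisfying conditions (1)–(5) and let `f` be proper,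
lower semicontinuous and bounded below. Then `I_{K,n} f` is uniformly continuous on
every bounded set; if in addition `K` is Lipschitz on bounded subsets of `X × X`,
then `I_{K,n} f` is Lipschitz on every bounded set. -/
theorem stmt_7 {X : Type*} [NormedAddCommGroup X] [NormedSpace ℝ X] [CompleteSpace X]
    (K : X → X → ℝ)
    (hK1 : (∀ x y : X, 0 ≤ K x y) ∧ ∀ x : X, K x x = 0)
    (hK2 : ∀ x y : X, K x y = K y x)
    (hK3 : ∀ r M : ℝ, 0 < r → 0 < M → ∃ R : ℝ, ∀ x y : X, ‖x‖ ≤ r → R ≤ ‖y‖ → M ≤ K x y)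
    (hK4 : ∀ s : Set (X × X), Bornology.IsBounded s →
      UniformContinuousOn (fun q : X × X => K q.1 q.2) s)
    (hK5 : ∀ x₀ : X, ∀ δ : ℝ, 0 < δ → ∃ C : ℝ, 0 < C ∧ ∀ y : X, δ ≤ ‖x₀ - y‖ → C ≤ K x₀ y)
    (f : X → EReal)
    (hproper : ∃ x, f x ≠ ⊤)
    (hlsc : LowerSemicontinuous f)
    (hbdd : ∃ m : ℝ, ∀ x, (m : EReal) ≤ f x)
    (n : ℕ) (hn : 0 < n) :
    (∀ s : Set X, Bornology.IsBounded s →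
      UniformContinuousOn
        (fun x : X => (⨅ y, f y + (((n : ℝ) * K x y : ℝ) : EReal)).toReal) s) ∧
    ((∀ s : Set (X × X), Bornology.IsBounded s →
        ∃ L : NNReal, LipschitzOnWith L (fun q : X × X => K q.1 q.2) s) →
      ∀ s : Set X, Bornology.IsBounded s →
        ∃ L : NNReal, LipschitzOnWith L
          (fun x : X => (⨅ y, f y + (((n : ℝ) * K x y : ℝ) : EReal)).toReal) s) := by
  obtain ⟨x₀, hx₀⟩ := hproper
  obtain ⟨m, hm⟩ := hbdd
  have hnpos : (0 : ℝ) < n := by exact_mod_cast hn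
  -- helper to enlarge radius
  have getr : ∀ s : Set X, Bornology.IsBounded s →
      ∃ r : ℝ, 1 ≤ r ∧ ‖x₀‖ ≤ r ∧ ∀ x ∈ s, ‖x‖ ≤ r := by
    intro s hs
    obtain ⟨r₀, hr₀⟩ := hs.subset_closedBall 0
    refine ⟨max r₀ (max 1 ‖x₀‖), ?_, ?_, ?_⟩
    · exact le_max_of_le_right (le_max_left _ _)
    · exact le_max_of_le_right (le_max_right _ _)
    · intro x hx
      have := hr₀ hx
      rw [Metric.mem_closedBall, dist_zero_right] at this
      exact this.trans (le_max_left _ _)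
  constructor
  · -- uniform continuity
    intro s hs
    obtain ⟨r, hr1, hrx₀, hrs⟩ := getr s hs
    obtain ⟨r', hrr', hkey⟩ := core_compare K hK1.1 hK1.2 hK3 hK4 f m hm x₀ hx₀ n hn r hr1 hrx₀
    rw [Metric.uniformContinuousOn_iff]
    intro ε hε
    set c : ℝ := ε / (2 * n) with hc
    have hcpos : 0 < c := by positivity
    obtain ⟨δ, hδ, hδ'⟩ := Metric.uniformContinuousOn_iff.1
      (hK4 (Metric.closedBall (0 : X × X) r') Metric.isBounded_closedBall) c hcpos
    refine ⟨δ, hδ, fun x hx x' hx' hd => ?_⟩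
    have hxr : ‖x‖ ≤ r := hrs x hx
    have hxr' : ‖x'‖ ≤ r := hrs x' hx'
    have hKc : ∀ (a b : X), ‖a‖ ≤ r → ‖b‖ ≤ r → dist a b < δ →
        ∀ y : X, ‖y‖ ≤ r' → K a y ≤ K b y + c := by
      intro a b ha hb hab y hy
      have hma : ((a, y) : X × X) ∈ Metric.closedBall (0 : X × X) r' := by
        rw [Metric.mem_closedBall, dist_zero_right]
        exact max_le (ha.trans hrr') hy
      have hmb : ((b, y) : X × X) ∈ Metric.closedBall (0 : X × X) r' := by
        rw [Metric.mem_closedBall, dist_zero_right]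
        exact max_le (hb.trans hrr') hy
      have hdab : dist ((a, y) : X × X) (b, y) < δ := by
        rw [Prod.dist_eq]
        simp only [dist_self]
        exact max_lt hab hδ
      have := hδ' (a, y) hma (b, y) hmb hdab
      rw [Real.dist_eq] at this
      have := (abs_sub_le_iff.1 this.le).1
      linarith
    have h1 := hkey x x' c hxr hxr' hcpos.le (hKc x x' hxr hxr' hd)
    have h2 := hkey x' x c hxr' hxr hcpos.le
      (hKc x' x hxr' hxr (by rwa [dist_comm]))
    have hnc : (n : ℝ) * c = ε / 2 := by rw [hc]; field_simp
    rw [Real.dist_eq, abs_sub_lt_iff]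
    constructor <;> [skip; skip] <;> nlinarith
  · -- Lipschitz
    intro hlip s hs
    obtain ⟨r, hr1, hrx₀, hrs⟩ := getr s hs
    obtain ⟨r', hrr', hkey⟩ := core_compare K hK1.1 hK1.2 hK3 hK4 f m hm x₀ hx₀ n hn r hr1 hrx₀
    obtain ⟨L, hL⟩ := hlip (Metric.closedBall (0 : X × X) r') Metric.isBounded_closedBall
    refine ⟨Real.toNNReal ((n : ℝ) * L), LipschitzOnWith.of_le_add_mul' _ ?_⟩
    intro x hx x' hx'
    have hxr : ‖x‖ ≤ r := hrs x hx
    have hxr' : ‖x'‖ ≤ r := hrs x' hx'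
    set c : ℝ := (L : ℝ) * dist x x' with hc
    have hcnn : 0 ≤ c := mul_nonneg L.2 dist_nonneg
    have hKc : ∀ y : X, ‖y‖ ≤ r' → K x y ≤ K x' y + c := by
      intro y hy
      have hma : ((x, y) : X × X) ∈ Metric.closedBall (0 : X × X) r' := by
        rw [Metric.mem_closedBall, dist_zero_right]
        exact max_le (hxr.trans hrr') hy
      have hmb : ((x', y) : X × X) ∈ Metric.closedBall (0 : X × X) r' := by
        rw [Metric.mem_closedBall, dist_zero_right]
        exact max_le (hxr'.trans hrr') hy
      have h0 := hL.dist_le_mul (x, y) hma (x', y) hmb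
      rw [Real.dist_eq] at h0
      have hde : dist ((x, y) : X × X) ((x', y) : X × X) = dist x x' := by
        rw [Prod.dist_eq]
        simp only [dist_self]
        exact max_eq_left dist_nonneg
      rw [hde] at h0
      have h2 := (abs_sub_le_iff.1 h0).1
      rw [hc]
      linarith
    have h1 := hkey x x' c hxr hxr' hcnn hKc
    calc (⨅ y, f y + (((n : ℝ) * K x y : ℝ) : EReal)).toReal
        ≤ (⨅ y, f y + (((n : ℝ) * K x' y : ℝ) : EReal)).toReal + (n : ℝ) * c := h1
      _ = _ := by rw [hc]; ring
end

section
/- Let X be a real Banach space, let K : X×X → ℝ be a kernel satisfying conditions (1)–(5), and let f : X → ℝ ∪ {+∞} be proper, lower semicontinuous and bounded below. Then for every x ∈ X, I_{K,n}(I_{K,n} f)(x) → f(x) as n → ∞ (convergence in ℝ ∪ {+∞}); and if f : X → ℝ is real-valued and continuous, the convergence is uniform on every compact subset of X. -/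
/-!
Since `K(x,x) = 0`, `I_{K,n} f ≤ f`, hence `I_{K,n}(I_{K,n} f) ≤ f`. Conversely, if `a < f x`,
lower semicontinuity gives `f > a` on a ball `B(x, δ)`. Pointwise separation (5), made locally
uniform in the first variable by coercivity (3) and uniform continuity (4), yields `C > 0` with
`K(z, y) ≥ C` for all `z` near `x` and `y ∉ B(x, δ)`; so `I_{K,n} f > a` near `x` once `n C` beats
`a - inf f`, and one more use of (5) gives `I_{K,n}(I_{K,n} f)(x) ≥ a` for large `n`.

For real-valued continuous `f`, every `I_{K,n}(I_{K,n} f)` is real-valued and continuous: upper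
semicontinuous as an infimum of continuous functions, lower semicontinuous because by (3) the
near-minimizers of points near `x₀` stay in a bounded set, on which (4) applies. The sequence
increases with `n`, so Dini's theorem turns pointwise convergence into uniform convergence on
compact sets.
-/

open scoped BigOperators

/-- The inf-convolution `I_{K,n} f (x) = inf_y ( f(y) + n K(x,y) )` for `f` with values
in `ℝ ∪ {+∞} ⊆ EReal`. -/
noncomputable def infConvK {X : Type*} [NormedAddCommGroup X]
    (K : X → X → ℝ) (f : X → EReal) (n : ℕ) (x : X) : EReal :=
  ⨅ y, f y + (((n : ℝ) * K x y : ℝ) : EReal)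

open Filter Topology Metric

section Kernel

variable {X : Type*} [NormedAddCommGroup X]

def KernelCoercive (K : X → X → ℝ) : Prop :=
  ∀ r M : ℝ, 0 < r → 0 < M → ∃ R : ℝ, ∀ x y : X, ‖x‖ ≤ r → R ≤ ‖y‖ → M ≤ K x y

def KernelUniformlyContinuousOnBounded (K : X → X → ℝ) : Prop :=
  ∀ s : Set (X × X), Bornology.IsBounded s → UniformContinuousOn (fun q : X × X => K q.1 q.2) s

def KernelSeparating (K : X → X → ℝ) : Prop :=
  ∀ x₀ : X, ∀ δ : ℝ, 0 < δ → ∃ C : ℝ, 0 < C ∧ ∀ y : X, δ ≤ ‖x₀ - y‖ → C ≤ K x₀ y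

variable {K : X → X → ℝ}

lemma KernelUniformlyContinuousOnBounded.eventually_forall_abs_sub_lt
    (hK : KernelUniformlyContinuousOnBounded K) (x : X) (r : ℝ) {ε : ℝ} (hε : 0 < ε) :
    ∀ᶠ z in 𝓝 x, ∀ y, ‖y‖ ≤ r → |K z y - K x y| < ε := by
  obtain ⟨η, hη, hKη⟩ := uniformContinuousOn_iff.1
    (hK (closedBall x 1 ×ˢ closedBall 0 r) (isBounded_closedBall.prod isBounded_closedBall)) ε hε
  filter_upwards [ball_mem_nhds x one_pos, ball_mem_nhds x hη] with z hz₁ hzη y hy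
  have hy' : y ∈ closedBall (0 : X) r := by simpa using hy
  simpa [Real.dist_eq] using
    hKη (z, y) ⟨ball_subset_closedBall hz₁, hy'⟩ (x, y) ⟨mem_closedBall_self zero_le_one, hy'⟩
      (by simpa [Prod.dist_eq] using hzη)

lemma KernelUniformlyContinuousOnBounded.continuous_left
    (hK : KernelUniformlyContinuousOnBounded K) (y : X) : Continuous (K · y) :=
  continuous_iff_continuousAt.2 fun x => tendsto_nhds.2 fun _ hε =>
    (hK.eventually_forall_abs_sub_lt x ‖y‖ hε).mono fun _ hz => hz y le_rfl

lemma KernelSeparating.exists_pos_eventually_le (hK5 : KernelSeparating K)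
    (hK3 : KernelCoercive K) (hK4 : KernelUniformlyContinuousOnBounded K) (x : X) {δ : ℝ}
    (hδ : 0 < δ) : ∃ C > 0, ∀ᶠ z in 𝓝 x, ∀ y, δ ≤ dist y x → C ≤ K z y := by
  obtain ⟨C, hC, hCK⟩ := hK5 x δ hδ
  obtain ⟨R, hR⟩ := hK3 (‖x‖ + 1) (C / 2) (by positivity) (half_pos hC)
  refine ⟨C / 2, half_pos hC, ?_⟩
  filter_upwards [ball_mem_nhds x one_pos, hK4.eventually_forall_abs_sub_lt x R (half_pos hC)]
    with z hz hzK y hy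
  rcases le_or_gt R ‖y‖ with hyR | hyR
  · exact hR z y (norm_lt_of_mem_ball hz).le hyR
  · have hxy : C ≤ K x y := hCK y (by rwa [← dist_eq_norm, dist_comm])
    linarith [(abs_lt.1 (hzK y hyR.le)).1]

end Kernel

section InfConvolution

variable {X : Type*} [NormedAddCommGroup X] {K : X → X → ℝ}

lemma infConvK_le_self (hK0 : ∀ x, K x x = 0) (f : X → EReal) (n : ℕ) (x : X) :
    infConvK K f n x ≤ f x :=
  iInf_le_of_le x (by simp [hK0 x])

lemma infConvK_mono (hKnn : ∀ x y, 0 ≤ K x y) {f f' : X → EReal} (hf : f ≤ f') {n n' : ℕ}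
    (hn : n ≤ n') (x : X) : infConvK K f n x ≤ infConvK K f' n' x :=
  iInf_mono fun y => add_le_add (hf y) <| EReal.coe_le_coe_iff.2 <|
    mul_le_mul_of_nonneg_right (by exact_mod_cast hn) (hKnn x y)

lemma monotone_infConvK_infConvK (hKnn : ∀ x y, 0 ≤ K x y) (f : X → EReal) (x : X) :
    Monotone fun n => infConvK K (infConvK K f n) n x :=
  fun _ _ hn => infConvK_mono hKnn (fun y => infConvK_mono hKnn le_rfl hn y) hn x

lemma coe_le_infConvK_of_le (hKnn : ∀ x y, 0 ≤ K x y) {f : X → EReal} {m : ℝ}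
    (hm : ∀ y, (m : EReal) ≤ f y) (n : ℕ) (x : X) : (m : EReal) ≤ infConvK K f n x :=
  le_iInf fun y => le_add_of_le_of_nonneg (hm y) <|
    EReal.coe_nonneg.2 (by have := hKnn x y; positivity)

lemma coe_le_infConvK_of_separated (hKnn : ∀ x y, 0 ≤ K x y) {f : X → EReal} {S : Set X}
    {z : X} {n : ℕ} {a m C : ℝ} (hm : ∀ y, (m : EReal) ≤ f y) (hS : ∀ y ∈ S, (a : EReal) ≤ f y)
    (hC : ∀ y ∉ S, C ≤ K z y) (hn : a ≤ m + n * C) : (a : EReal) ≤ infConvK K f n z := by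
  refine le_iInf fun y => ?_
  by_cases hy : y ∈ S
  · exact le_add_of_le_of_nonneg (hS y hy) (EReal.coe_nonneg.2 (by have := hKnn z y; positivity))
  · calc (a : EReal) ≤ ((m + n * K z y : ℝ) : EReal) := by
          exact_mod_cast hn.trans (by gcongr; exact hC y hy)
      _ = m + ((n * K z y : ℝ) : EReal) := EReal.coe_add _ _
      _ ≤ f y + ((n * K z y : ℝ) : EReal) := by gcongr; exact hm y

lemma eventually_coe_le_infConvK_infConvK (hKnn : ∀ x y, 0 ≤ K x y) (hK3 : KernelCoercive K)
    (hK4 : KernelUniformlyContinuousOnBounded K) (hK5 : KernelSeparating K) {f : X → EReal}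
    {m : ℝ} (hm : ∀ y, (m : EReal) ≤ f y) (hf : LowerSemicontinuous f) {x : X} {a : ℝ}
    (ha : (a : EReal) < f x) :
    ∀ᶠ n : ℕ in atTop, (a : EReal) ≤ infConvK K (infConvK K f n) n x := by
  obtain ⟨δ, hδ, hfa⟩ := eventually_nhds_iff_ball.1 (hf x a ha)
  obtain ⟨C₁, hC₁, hnear⟩ := hK5.exists_pos_eventually_le hK3 hK4 x hδ
  obtain ⟨τ, hτ, hτC₁⟩ := eventually_nhds_iff_ball.1 hnear
  obtain ⟨C₂, hC₂, hfar⟩ := hK5 x τ hτ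
  have hC : 0 < min C₁ C₂ := lt_min hC₁ hC₂
  filter_upwards [(tendsto_natCast_atTop_atTop.atTop_mul_const hC).eventually_ge_atTop (a - m)]
    with n hn
  refine coe_le_infConvK_of_separated hKnn (coe_le_infConvK_of_le hKnn hm n) (S := ball x τ)
    (fun z hz => ?_) (fun z hz => (min_le_right _ _).trans (hfar z ?_)) (by linarith)
  · exact coe_le_infConvK_of_separated hKnn hm (S := ball x δ) (fun y hy => (hfa y hy).le)
      (fun y hy => (min_le_left _ _).trans (hτC₁ z hz y (not_lt.1 hy))) (by linarith)
  · rwa [mem_ball, not_lt, dist_eq_norm, norm_sub_rev] at hz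

lemma tendsto_infConvK_infConvK (hKnn : ∀ x y, 0 ≤ K x y) (hK0 : ∀ x, K x x = 0)
    (hK3 : KernelCoercive K) (hK4 : KernelUniformlyContinuousOnBounded K)
    (hK5 : KernelSeparating K) {f : X → EReal} {m : ℝ} (hm : ∀ y, (m : EReal) ≤ f y)
    (hf : LowerSemicontinuous f) (x : X) :
    Tendsto (fun n => infConvK K (infConvK K f n) n x) atTop (𝓝 (f x)) := by
  refine tendsto_order.2 ⟨fun b hb => ?_, fun b hb => Eventually.of_forall fun n => ?_⟩
  · obtain ⟨a, hba, haf⟩ := EReal.exists_between_coe_real hb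
    filter_upwards [eventually_coe_le_infConvK_infConvK hKnn hK3 hK4 hK5 hm hf haf] with n hn
    exact hba.trans_le hn
  · exact ((infConvK_le_self hK0 _ n x).trans (infConvK_le_self hK0 f n x)).trans_lt hb

end InfConvolution

section RealInfConvolution

variable {X : Type*} {K : X → X → ℝ} {ψ : X → ℝ} {m : ℝ}

noncomputable def realInfConv (K : X → X → ℝ) (ψ : X → ℝ) (n : ℕ) (x : X) : ℝ :=
  ⨅ y, ψ y + n * K x y

lemma bddBelow_range_add_mul (hKnn : ∀ x y, 0 ≤ K x y) (hψ : ∀ y, m ≤ ψ y) (n : ℕ) (x : X) :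
    BddBelow (Set.range fun y => ψ y + n * K x y) :=
  ⟨m, by rintro _ ⟨y, rfl⟩; exact le_add_of_le_of_nonneg (hψ y) (by have := hKnn x y; positivity)⟩

lemma realInfConv_le (hKnn : ∀ x y, 0 ≤ K x y) (hψ : ∀ y, m ≤ ψ y) (n : ℕ) (x y : X) :
    realInfConv K ψ n x ≤ ψ y + n * K x y :=
  ciInf_le (bddBelow_range_add_mul hKnn hψ n x) y

lemma le_realInfConv [Nonempty X] (hKnn : ∀ x y, 0 ≤ K x y) (hψ : ∀ y, m ≤ ψ y) (n : ℕ) (x : X) :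
    m ≤ realInfConv K ψ n x :=
  le_ciInf fun y => le_add_of_le_of_nonneg (hψ y) (by have := hKnn x y; positivity)

variable [NormedAddCommGroup X]

lemma coe_realInfConv (hKnn : ∀ x y, 0 ≤ K x y) (hψ : ∀ y, m ≤ ψ y) (n : ℕ) (x : X) :
    (realInfConv K ψ n x : EReal) = infConvK K (fun y => (ψ y : EReal)) n x :=
  (Monotone.map_ciInf_of_continuousAt continuous_coe_real_ereal.continuousAt
    EReal.coe_strictMono.monotone (bddBelow_range_add_mul hKnn hψ n x)).trans
    (iInf_congr fun _ => EReal.coe_add _ _)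

lemma infConvK_infConvK_coe (hKnn : ∀ x y, 0 ≤ K x y) (hψ : ∀ y, m ≤ ψ y) (n : ℕ) (x : X) :
    infConvK K (infConvK K (fun y => (ψ y : EReal)) n) n x =
      realInfConv K (realInfConv K ψ n) n x := by
  have hinner : infConvK K (fun y => (ψ y : EReal)) n = fun y => (realInfConv K ψ n y : EReal) :=
    funext fun y => (coe_realInfConv hKnn hψ n y).symm
  rw [hinner, coe_realInfConv hKnn (le_realInfConv hKnn hψ n)]

lemma upperSemicontinuous_realInfConv (hKnn : ∀ x y, 0 ≤ K x y)
    (hK4 : KernelUniformlyContinuousOnBounded K) (hψ : ∀ y, m ≤ ψ y) (n : ℕ) :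
    UpperSemicontinuous (realInfConv K ψ n) :=
  upperSemicontinuous_ciInf (bddBelow_range_add_mul hKnn hψ n) fun y =>
    (continuous_const.add (continuous_const.mul (hK4.continuous_left y))).upperSemicontinuous

lemma lowerSemicontinuous_realInfConv (hKnn : ∀ x y, 0 ≤ K x y) (hK3 : KernelCoercive K)
    (hK4 : KernelUniformlyContinuousOnBounded K) (hψ : ∀ y, m ≤ ψ y) {n : ℕ} (hn : 0 < n) :
    LowerSemicontinuous (realInfConv K ψ n) := by
  have hn' : (0 : ℝ) < n := by exact_mod_cast hn
  intro x₀ c hc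
  set ε := (realInfConv K ψ n x₀ - c) / 2 with hε_def
  have hε : 0 < ε := half_pos (sub_pos.2 hc)
  have hm₀ := le_realInfConv hKnn hψ n x₀
  obtain ⟨R, hR⟩ := hK3 (‖x₀‖ + 1) ((realInfConv K ψ n x₀ + 1 + ε - m) / n) (by positivity)
    (div_pos (by linarith) hn')
  filter_upwards [ball_mem_nhds x₀ one_pos,
    upperSemicontinuous_realInfConv hKnn hK4 hψ n x₀ _ (lt_add_one _),
    hK4.eventually_forall_abs_sub_lt x₀ R (div_pos hε hn')] with x hx hFx hKx
  obtain ⟨y, hy⟩ : ∃ y, ψ y + n * K x y < realInfConv K ψ n x + ε :=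
    exists_lt_of_ciInf_lt (lt_add_of_pos_right _ hε)
  -- a near-minimizer for `x` has bounded penalty, so it cannot escape to infinity
  have hyR : ‖y‖ < R := by
    by_contra! hRy
    have := (div_le_iff₀' hn').1 (hR x y (norm_lt_of_mem_ball hx).le hRy)
    linarith [hψ y]
  have hKy := (lt_div_iff₀' hn').1 (show K x₀ y - K x y < ε / n by
    linarith [(abs_lt.1 (hKx y hyR.le)).1])
  rw [mul_sub] at hKy
  linarith [realInfConv_le hKnn hψ n x₀ y]

lemma continuous_realInfConv (hKnn : ∀ x y, 0 ≤ K x y) (hK3 : KernelCoercive K)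
    (hK4 : KernelUniformlyContinuousOnBounded K) (hψ : ∀ y, m ≤ ψ y) (n : ℕ) :
    Continuous (realInfConv K ψ n) := by
  rcases n.eq_zero_or_pos with rfl | hn
  · exact (continuous_const (y := ⨅ y, ψ y)).congr fun x => by simp [realInfConv]
  · exact continuous_iff_lower_upperSemicontinuous.2
      ⟨lowerSemicontinuous_realInfConv hKnn hK3 hK4 hψ hn,
        upperSemicontinuous_realInfConv hKnn hK4 hψ n⟩

end RealInfConvolution

theorem stmt_8_general {X : Type*} [NormedAddCommGroup X]
    (K : X → X → ℝ)
    (hK1 : (∀ x y : X, 0 ≤ K x y) ∧ ∀ x : X, K x x = 0)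
    (hK3 : ∀ r M : ℝ, 0 < r → 0 < M → ∃ R : ℝ, ∀ x y : X, ‖x‖ ≤ r → R ≤ ‖y‖ → M ≤ K x y)
    (hK4 : ∀ s : Set (X × X), Bornology.IsBounded s →
      UniformContinuousOn (fun q : X × X => K q.1 q.2) s)
    (hK5 : ∀ x₀ : X, ∀ δ : ℝ, 0 < δ → ∃ C : ℝ, 0 < C ∧ ∀ y : X, δ ≤ ‖x₀ - y‖ → C ≤ K x₀ y)
    (f : X → EReal)
    (hlsc : LowerSemicontinuous f)
    (hbdd : ∃ m : ℝ, ∀ x, (m : EReal) ≤ f x) :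
    (∀ x : X, Filter.Tendsto
        (fun n : ℕ => infConvK K (fun y => infConvK K f n y) n x)
        Filter.atTop (nhds (f x))) ∧
    (∀ g : X → ℝ, Continuous g → (∀ x, f x = (g x : EReal)) →
      ∀ s : Set X, IsCompact s →
        TendstoUniformlyOn
          (fun (n : ℕ) (x : X) => (infConvK K (fun y => infConvK K f n y) n x).toReal)
          g Filter.atTop s) := by
  obtain ⟨hKnn, hK0⟩ := hK1
  obtain ⟨m, hm⟩ := hbdd
  have hlim := tendsto_infConvK_infConvK hKnn hK0 hK3 hK4 hK5 hm hlsc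
  refine ⟨hlim, fun g hg hfg s hs => ?_⟩
  obtain rfl : f = fun x => (g x : EReal) := funext hfg
  have hgm : ∀ y, m ≤ g y := fun y => EReal.coe_le_coe_iff.1 (hm y)
  have hcoe := infConvK_infConvK_coe hKnn hgm
  simp only [hcoe, EReal.toReal_coe]
  refine Monotone.tendstoUniformlyOn_of_forall_tendsto hs
    (fun n => (continuous_realInfConv hKnn hK3 hK4 (le_realInfConv hKnn hgm n) n).continuousOn)
    (fun x _ n n' hnn' => ?_) hg.continuousOn (fun x _ => ?_)
  · simpa only [hcoe, EReal.coe_le_coe_iff] using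
      monotone_infConvK_infConvK hKnn (fun y => (g y : EReal)) x hnn'
  · simpa only [hcoe, EReal.tendsto_coe] using hlim x

/-- Let `K` be a kernel satisfying conditions (1)–(5) and let `f` be proper,
lower semicontinuous and bounded below. Then `I_{K,n}(I_{K,n} f) → f` pointwise
(in `ℝ ∪ {+∞}`), and uniformly on compact sets when `f` is real-valued and continuous. -/
theorem stmt_8 {X : Type*} [NormedAddCommGroup X] [NormedSpace ℝ X] [CompleteSpace X]
    (K : X → X → ℝ)
    (hK1 : (∀ x y : X, 0 ≤ K x y) ∧ ∀ x : X, K x x = 0)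
    (hK2 : ∀ x y : X, K x y = K y x)
    (hK3 : ∀ r M : ℝ, 0 < r → 0 < M → ∃ R : ℝ, ∀ x y : X, ‖x‖ ≤ r → R ≤ ‖y‖ → M ≤ K x y)
    (hK4 : ∀ s : Set (X × X), Bornology.IsBounded s →
      UniformContinuousOn (fun q : X × X => K q.1 q.2) s)
    (hK5 : ∀ x₀ : X, ∀ δ : ℝ, 0 < δ → ∃ C : ℝ, 0 < C ∧ ∀ y : X, δ ≤ ‖x₀ - y‖ → C ≤ K x₀ y)
    (f : X → EReal)
    (hproper : ∃ x, f x ≠ ⊤)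
    (hlsc : LowerSemicontinuous f)
    (hbdd : ∃ m : ℝ, ∀ x, (m : EReal) ≤ f x) :
    (∀ x : X, Filter.Tendsto
        (fun n : ℕ => infConvK K (fun y => infConvK K f n y) n x)
        Filter.atTop (nhds (f x))) ∧
    (∀ g : X → ℝ, Continuous g → (∀ x, f x = (g x : EReal)) →
      ∀ s : Set X, IsCompact s →
        TendstoUniformlyOn
          (fun (n : ℕ) (x : X) => (infConvK K (fun y => infConvK K f n y) n x).toReal)
          g Filter.atTop s) :=
  stmt_8_general K hK1 hK3 hK4 hK5 f hlsc hbdd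
end

section
/- Let X be a real Banach space, let K : X×X → ℝ be a kernel satisfying conditions (1)–(4) which is moreover uniformly separating, and let f : X → ℝ be bounded below and uniformly continuous on X. Then I_{K,n}(I_{K,n} f) → f uniformly on X as n → ∞. -/
/-- Chaining lemma for uniformly continuous functions. -/
lemma chain_aux {X : Type*} [NormedAddCommGroup X] [NormedSpace ℝ X]
    (f : X → ℝ) (ε δ : ℝ) (hδ : 0 < δ)
    (h : ∀ a b : X, ‖a - b‖ ≤ δ → f a - f b ≤ ε) :
    ∀ k : ℕ, ∀ x z : X, ‖x - z‖ ≤ ((k : ℝ) + 1) * δ → f x - f z ≤ ((k : ℝ) + 1) * ε := by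
  intro k
  induction k with
  | zero =>
    intro x z hxz
    have := h x z (by simpa using hxz)
    simpa using this
  | succ k ih =>
    intro x z hxz
    have hε : 0 ≤ ε := by simpa using h x x (by simp [hδ.le])
    by_cases hc : ‖x - z‖ ≤ ((k : ℝ) + 1) * δ
    · have := ih x z hc
      push_cast
      nlinarith
    · push_neg at hc
      set d := ‖x - z‖ with hd
      have hkd : 0 < ((k : ℝ) + 1) * δ := by positivity
      have hd0 : 0 < d := hkd.trans hc
      have hδd : δ ≤ d := le_trans (by nlinarith [show (0:ℝ) ≤ (k:ℝ) from Nat.cast_nonneg k]) hc.le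
      set w := x + (δ / d) • (z - x) with hw
      have hxw : ‖x - w‖ = δ := by
        have hxweq : x - w = -((δ / d) • (z - x)) := by rw [hw]; abel
        rw [hxweq, norm_neg, norm_smul, norm_sub_rev z x, ← hd]
        rw [Real.norm_eq_abs, abs_of_pos (by positivity)]
        field_simp
      have hwz : ‖w - z‖ = d - δ := by
        have hwzeq : w - z = (1 - δ / d) • (x - z) := by
          rw [hw, sub_smul, one_smul, smul_sub]
          module
        rw [hwzeq, norm_smul, ← hd, Real.norm_eq_abs]
        have h1 : 0 ≤ 1 - δ / d := by
          rw [sub_nonneg, div_le_one hd0]; exact hδd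
        rw [abs_of_nonneg h1]
        field_simp
      have h1 : f x - f w ≤ ε := h x w (le_of_eq hxw)
      have h2 : f w - f z ≤ ((k : ℝ) + 1) * ε := by
        apply ih
        rw [hwz]
        push_cast at hxz ⊢
        linarith
      push_cast
      linarith

lemma chain {X : Type*} [NormedAddCommGroup X] [NormedSpace ℝ X]
    (f : X → ℝ) (ε δ : ℝ) (hδ : 0 < δ)
    (h : ∀ a b : X, ‖a - b‖ ≤ δ → f a - f b ≤ ε) :
    ∀ x z : X, f x - f z ≤ ε * (‖x - z‖ / δ + 1) := by
  intro x z
  have hε : 0 ≤ ε := by simpa using h x x (by simp [hδ.le])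
  set a := ‖x - z‖ / δ with ha
  have ha0 : 0 ≤ a := by positivity
  have h1 : a < ⌊a⌋₊ + 1 := Nat.lt_floor_add_one a
  have h2 : ‖x - z‖ ≤ ((⌊a⌋₊ : ℝ) + 1) * δ := by
    rw [← div_le_iff₀ hδ] at *
    exact h1.le
  have := chain_aux f ε δ hδ h ⌊a⌋₊ x z h2
  have h3 : (⌊a⌋₊ : ℝ) ≤ a := Nat.floor_le ha0
  nlinarith
open scoped BigOperators

/-- The inf-convolution `I_{K,n} f (x) = inf_y ( f(y) + n K(x,y) )` for real-valued `f`. -/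
noncomputable def infConvKR {X : Type*} [NormedAddCommGroup X]
    (K : X → X → ℝ) (f : X → ℝ) (n : ℕ) (x : X) : ℝ :=
  ⨅ y, f y + (n : ℝ) * K x y

/-- Let `K` be a kernel satisfying conditions (1)–(4) which is uniformly separating,
and let `f : X → ℝ` be bounded below and uniformly continuous on `X`. Then
`I_{K,n}(I_{K,n} f) → f` uniformly on `X`. -/
theorem stmt_10 {X : Type*} [NormedAddCommGroup X] [NormedSpace ℝ X] [CompleteSpace X]
    (K : X → X → ℝ)
    (hK1 : (∀ x y : X, 0 ≤ K x y) ∧ ∀ x : X, K x x = 0)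
    (hK2 : ∀ x y : X, K x y = K y x)
    (hK3 : ∀ r M : ℝ, 0 < r → 0 < M → ∃ R : ℝ, ∀ x y : X, ‖x‖ ≤ r → R ≤ ‖y‖ → M ≤ K x y)
    (hK4 : ∀ s : Set (X × X), Bornology.IsBounded s →
      UniformContinuousOn (fun q : X × X => K q.1 q.2) s)
    (hKsep : ∀ δ : ℝ, 0 < δ → ∃ β : ℝ, 0 < β ∧
      ∀ x y : X, δ ≤ ‖x - y‖ → β * ‖x - y‖ ≤ K x y)
    (f : X → ℝ)
    (hbdd : ∃ m : ℝ, ∀ x, m ≤ f x)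
    (hu : UniformContinuous f) :
    TendstoUniformly
      (fun (n : ℕ) (x : X) => infConvKR K (fun y => infConvKR K f n y) n x)
      f Filter.atTop := by
  obtain ⟨m, hm⟩ := hbdd
  have hK0 := hK1.1
  have hKd := hK1.2
  -- bddBelow of inner family
  have hbdd1 : ∀ (n : ℕ) (x : X), BddBelow (Set.range fun y => f y + (n : ℝ) * K x y) := by
    intro n x
    refine ⟨m, ?_⟩
    rintro _ ⟨y, rfl⟩
    have h1 : 0 ≤ (n : ℝ) * K x y := mul_nonneg (Nat.cast_nonneg n) (hK0 x y)
    have := hm y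
    dsimp only
    linarith
  have hIm : ∀ (n : ℕ) (x : X), m ≤ infConvKR K f n x := by
    intro n x
    exact le_ciInf fun y => by
      have h1 : 0 ≤ (n : ℝ) * K x y := mul_nonneg (Nat.cast_nonneg n) (hK0 x y)
      have := hm y; linarith
  have hbdd2 : ∀ (n : ℕ) (x : X),
      BddBelow (Set.range fun y => infConvKR K f n y + (n : ℝ) * K x y) := by
    intro n x
    refine ⟨m, ?_⟩
    rintro _ ⟨y, rfl⟩
    have h1 : 0 ≤ (n : ℝ) * K x y := mul_nonneg (Nat.cast_nonneg n) (hK0 x y)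
    have := hIm n y
    dsimp only
    linarith
  have hIle : ∀ (n : ℕ) (x : X), infConvKR K f n x ≤ f x := by
    intro n x
    have := ciInf_le (hbdd1 n x) x
    simpa [infConvKR, hKd x] using this
  have hIIle : ∀ (n : ℕ) (x : X),
      infConvKR K (fun y => infConvKR K f n y) n x ≤ f x := by
    intro n x
    have h1 : infConvKR K (fun y => infConvKR K f n y) n x ≤ infConvKR K f n x := by
      have := ciInf_le (hbdd2 n x) x
      simpa [infConvKR, hKd x] using this
    exact h1.trans (hIle n x)
  rw [Metric.tendstoUniformly_iff]
  intro ε hε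
  set ε' := ε / 4 with hε'def
  have hε' : 0 < ε' := by positivity
  obtain ⟨δ, hδ, hδf⟩ := Metric.uniformContinuous_iff.1 hu ε' hε'
  set δ' := δ / 2 with hδ'def
  have hδ' : 0 < δ' := by positivity
  have hstep : ∀ a b : X, ‖a - b‖ ≤ δ' → f a - f b ≤ ε' := by
    intro a b hab
    have h1 : dist a b < δ := by
      rw [dist_eq_norm]; linarith
    have := hδf h1
    rw [Real.dist_eq] at this
    have := abs_lt.1 this
    linarith [this.1]
  have hchain := chain f ε' δ' hδ' hstep
  obtain ⟨β, hβ, hsep⟩ := hKsep (δ' / 2) (by positivity)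
  obtain ⟨N, hN⟩ := exists_nat_ge (2 * ε' / (β * δ'))
  refine Filter.eventually_atTop.2 ⟨N, fun n hn x => ?_⟩
  have hnR : 2 * ε' / (β * δ') ≤ (n : ℝ) := hN.trans (by exact_mod_cast hn)
  -- core inequality
  have core : ∀ y z : X, f x ≤ f z + (n : ℝ) * K y z + (n : ℝ) * K x y + 2 * ε' := by
    intro y z
    have hKxy : 0 ≤ (n : ℝ) * K x y := mul_nonneg (Nat.cast_nonneg n) (hK0 x y)
    have hKyz : 0 ≤ (n : ℝ) * K y z := mul_nonneg (Nat.cast_nonneg n) (hK0 y z)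
    by_cases hc : ‖x - z‖ ≤ δ'
    · have := hstep x z hc
      linarith
    · push_neg at hc
      set d := ‖x - z‖ with hd
      have hd0 : 0 < d := hδ'.trans hc
      have h1 : f x - f z ≤ ε' * (d / δ' + 1) := hchain x z
      -- K lower bound
      have htri : d ≤ ‖x - y‖ + ‖y - z‖ := by
        have := dist_triangle x y z
        simpa [dist_eq_norm] using this
      have hKbig : β * d / 2 ≤ K y z + K x y := by
        rcases le_or_gt (d / 2) ‖x - y‖ with hxy | hxy
        · have hth : δ' / 2 ≤ ‖x - y‖ := le_trans (by linarith) hxy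
          have := hsep x y hth
          have := hK0 y z
          nlinarith
        · have hyz : d / 2 ≤ ‖y - z‖ := by linarith
          have hth : δ' / 2 ≤ ‖y - z‖ := le_trans (by linarith) hyz
          have := hsep y z hth
          have := hK0 x y
          nlinarith
      have hmul : ε' * d / δ' ≤ (n : ℝ) * (β * d / 2) := by
        have h2 : 2 * ε' / (β * δ') * (β * d / 2) ≤ (n : ℝ) * (β * d / 2) :=
          mul_le_mul_of_nonneg_right hnR (by positivity)
        have h3 : 2 * ε' / (β * δ') * (β * d / 2) = ε' * d / δ' := by
          field_simp
        linarith [h3 ▸ h2]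
      have h4 : (n : ℝ) * (β * d / 2) ≤ (n : ℝ) * K y z + (n : ℝ) * K x y := by
        have := mul_le_mul_of_nonneg_left hKbig (Nat.cast_nonneg n : (0:ℝ) ≤ n)
        linarith [this]
      have h5 : ε' * (d / δ' + 1) = ε' * d / δ' + ε' := by ring
      linarith
  -- lower bound
  have hlow : f x - 2 * ε' ≤ infConvKR K (fun y => infConvKR K f n y) n x := by
    apply le_ciInf
    intro y
    have h1 : f x - 2 * ε' - (n : ℝ) * K x y ≤ infConvKR K f n y := by
      apply le_ciInf
      intro z
      have := core y z
      linarith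
    linarith
  have hup := hIIle n x
  rw [Real.dist_eq, abs_sub_lt_iff]
  rw [hε'def] at hlow
  constructor <;> linarith
end
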